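/- arXiv:1701.07872 — 16 statements merged into one kernel-verified Lean document; each statement's English description precedes it below -/
import Mathlib

section
/- For every integer n ≥ 3, T(n, n−1) = 2^{n−1}, i.e. the maximum size of an equireplicate binary code of length n with diameter at most n−1 is exactly 2^{n−1}. -/
/-- A binary code `C ⊆ F_2^n` is equireplicate if the number of codewords having a `1`
in coordinate `i` is the same for all coordinates `i`. -/
def Equireplicate (n : ℕ) (C : Finset (Fin n → ZMod 2)) : Prop :=
  ∃ r : ℕ, ∀ i : Fin n, (C.filter fun x => x i = 1).card = r

/-- The set of sizes of equireplicate binary codes of length `n`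
with diameter at most `w`; `T(n,w)` is its greatest element. -/
def equireplicateCodeSizes (n w : ℕ) : Set ℕ :=
  {M | ∃ C : Finset (Fin n → ZMod 2),
    Equireplicate n C ∧ (∀ x ∈ C, ∀ y ∈ C, hammingDist x y ≤ w) ∧ C.card = M}

lemma zmod2_add_self (a : ZMod 2) : a + a = 0 := by revert a; decide

lemma zmod2_flip0 (a : ZMod 2) : a + 1 = 0 ↔ ¬ a = 0 := by revert a; decide

lemma zmod2_flip1 (a : ZMod 2) : a + 1 = 1 ↔ ¬ a = 1 := by revert a; decide

lemma zmod2_three (a b c : ZMod 2) :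
    a + 1 + (b + 1) + (c + 1) = a + b + c + 1 := by revert a b c; decide

lemma zmod2_ne_add_one (a : ZMod 2) : a ≠ a + 1 := by revert a; decide

lemma zmod2_ne (a b : ZMod 2) (h : a ≠ b) : b = a + 1 := by revert a b; decide

lemma pi_add_self {n : ℕ} (x : Fin n → ZMod 2) : x + x = 0 :=
  funext fun i => zmod2_add_self (x i)

lemma card_filter_add_eq {n : ℕ} (v : Fin n → ZMod 2)
    (p : (Fin n → ZMod 2) → Prop) [DecidablePred p] :
    (Finset.univ.filter p).card = (Finset.univ.filter (fun x => p (x + v))).card := by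
  refine Finset.card_bij' (fun x _ => x + v) (fun x _ => x + v) ?_ ?_ ?_ ?_ <;>
    intro a ha <;>
    simp only [Finset.mem_filter, Finset.mem_univ, true_and, add_assoc, pi_add_self,
      add_zero] at ha ⊢ <;> exact ha

lemma half_card {n : ℕ} (p : (Fin n → ZMod 2) → Prop) [DecidablePred p]
    (v : Fin n → ZMod 2) (hv : ∀ x, p (x + v) ↔ ¬ p x) :
    2 * (Finset.univ.filter p).card = 2 ^ n := by
  have h1 := card_filter_add_eq v p
  have h2 : (Finset.univ.filter (fun x => p (x + v)))
      = Finset.univ.filter (fun x => ¬ p x) := by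
    apply Finset.filter_congr; intro x _; simp [hv]
  rw [h2] at h1
  have h3 := Finset.card_filter_add_card_filter_not (s := (Finset.univ : Finset (Fin n → ZMod 2))) (p := p)
  have h4 : (Finset.univ : Finset (Fin n → ZMod 2)).card = 2 ^ n := by
    simp [Finset.card_univ]
  omega

lemma quarter_card {n : ℕ} (p q : (Fin n → ZMod 2) → Prop) [DecidablePred p] [DecidablePred q]
    (v : Fin n → ZMod 2) (hpv : ∀ x, p (x + v) ↔ p x) (hqv : ∀ x, q (x + v) ↔ ¬ q x) :
    2 * (Finset.univ.filter (fun x => p x ∧ q x)).card = (Finset.univ.filter p).card := by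
  have h1 := card_filter_add_eq v (fun x => p x ∧ q x)
  have h2 : (Finset.univ.filter (fun x => p (x + v) ∧ q (x + v)))
      = Finset.univ.filter (fun x => p x ∧ ¬ q x) := by
    apply Finset.filter_congr; intro x _; simp [hpv, hqv]
  have h3 := Finset.card_filter_add_card_filter_not
    (s := Finset.univ.filter p) (p := q)
  rw [Finset.filter_filter, Finset.filter_filter] at h3
  rw [h2] at h1
  omega

theorem stmt_1 (n : ℕ) (hn : 3 ≤ n) :
    IsGreatest (equireplicateCodeSizes n (n - 1)) (2 ^ (n - 1)) := by
  have hpow1 : (2:ℕ) ^ n = 2 * 2 ^ (n - 1) := by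
    rw [← pow_succ']; congr 1; omega
  have hpow2 : (2:ℕ) ^ (n - 1) = 2 * 2 ^ (n - 2) := by
    rw [← pow_succ']; congr 1; omega
  constructor
  · -- lower bound: the code {x : x 0 + x 1 + x 2 = 0}
    set i0 : Fin n := ⟨0, by omega⟩ with hi0
    set i1 : Fin n := ⟨1, by omega⟩ with hi1
    set i2 : Fin n := ⟨2, by omega⟩ with hi2
    have h01 : i1 ≠ i0 := by simp [hi0, hi1, Fin.ext_iff]
    have h02 : i2 ≠ i0 := by simp [hi0, hi2, Fin.ext_iff]
    have h12 : i2 ≠ i1 := by simp [hi1, hi2, Fin.ext_iff]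
    set p : (Fin n → ZMod 2) → Prop := fun x => x i0 + x i1 + x i2 = 0 with hp
    set C : Finset (Fin n → ZMod 2) := Finset.univ.filter p with hC
    have hadd : ∀ x v : Fin n → ZMod 2,
        (x + v) i0 + (x + v) i1 + (x + v) i2
          = (x i0 + x i1 + x i2) + (v i0 + v i1 + v i2) := by
      intro x v; simp only [Pi.add_apply]; ring
    -- cardinality of C
    have hcardC : 2 * C.card = 2 ^ n := by
      apply half_card p (Pi.single i0 1)
      intro x
      have hs : (Pi.single i0 1 : Fin n → ZMod 2) i0 + (Pi.single i0 1 : Fin n → ZMod 2) i1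
          + (Pi.single i0 1 : Fin n → ZMod 2) i2 = 1 := by
        simp [Pi.single_apply, h01, h02]
      rw [hp]
      simp only [hadd, hs]
      exact zmod2_flip0 _
    have hcardC' : C.card = 2 ^ (n - 1) := by omega
    refine ⟨C, ⟨2 ^ (n - 2), ?_⟩, ?_, hcardC'⟩
    · -- equireplicate
      intro i
      have key : ∃ v : Fin n → ZMod 2,
          (v i0 + v i1 + v i2 = 0) ∧ v i = 1 := by
        by_cases h0 : i = i0
        · refine ⟨Pi.single i0 1 + Pi.single i1 1, ?_, ?_⟩
          · simp [Pi.add_apply, Pi.single_apply, h01, h02, h12, Ne.symm h01,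
              Ne.symm h02, Ne.symm h12, zmod2_add_self]
          · simp [h0, Pi.add_apply, Pi.single_apply, Ne.symm h01]
        · by_cases h1 : i = i1
          · refine ⟨Pi.single i0 1 + Pi.single i1 1, ?_, ?_⟩
            · simp [Pi.add_apply, Pi.single_apply, h01, h02, h12, Ne.symm h01,
                Ne.symm h02, Ne.symm h12, zmod2_add_self]
            · simp [h1, Pi.add_apply, Pi.single_apply, h01]
          · by_cases h2 : i = i2
            · refine ⟨Pi.single i0 1 + Pi.single i2 1, ?_, ?_⟩
              · simp [Pi.add_apply, Pi.single_apply, h01, h02, h12, Ne.symm h01,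
                  Ne.symm h02, Ne.symm h12, zmod2_add_self]
              · simp [h2, Pi.add_apply, Pi.single_apply, h02]
            · refine ⟨Pi.single i 1, ?_, ?_⟩
              · simp [Pi.single_apply, Ne.symm h0, Ne.symm h1, Ne.symm h2]
              · exact Pi.single_eq_same i 1
      obtain ⟨v, hv0, hv1⟩ := key
      have hpv : ∀ x, p (x + v) ↔ p x := by
        intro x; rw [hp]; simp only [hadd, hv0, add_zero]
      have hqv : ∀ x : Fin n → ZMod 2, (x + v) i = 1 ↔ ¬ x i = 1 := by
        intro x
        simp only [Pi.add_apply, hv1]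
        exact zmod2_flip1 _
      have hq := quarter_card p (fun x => x i = 1) v hpv hqv
      rw [hC, Finset.filter_filter]
      have hq' : 2 * (Finset.univ.filter fun x => p x ∧ x i = 1).card = 2 * 2 ^ (n - 2) := by
        rw [hq, hcardC', hpow2]
      exact Nat.eq_of_mul_eq_mul_left (by norm_num) hq'
    · -- diameter at most n - 1
      intro x hx y hy
      rw [hC, Finset.mem_filter] at hx hy
      have hxp := hx.2
      have hyp := hy.2
      -- there is a coordinate where x and y agree
      have hagree : ∃ j : Fin n, x j = y j := by
        by_contra hcon
        push_neg at hcon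
        have hone : ∀ j, y j = x j + 1 := fun j => zmod2_ne _ _ (hcon j)
        rw [hp] at hxp hyp
        rw [hone i0, hone i1, hone i2] at hyp
        rw [zmod2_three, hxp, zero_add] at hyp
        exact one_ne_zero hyp
      obtain ⟨j, hj⟩ := hagree
      have hsub : (Finset.univ.filter fun k => x k ≠ y k) ⊆ Finset.univ.erase j := by
        intro k hk
        rw [Finset.mem_filter] at hk
        rw [Finset.mem_erase]
        refine ⟨?_, Finset.mem_univ k⟩
        rintro rfl
        exact hk.2 hj
      calc hammingDist x y ≤ (Finset.univ.erase j).card := Finset.card_le_card hsub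
        _ = n - 1 := by rw [Finset.card_erase_of_mem (Finset.mem_univ j)]; simp
  · -- upper bound
    rintro M ⟨C, _, hdiam, hcard⟩
    set one : Fin n → ZMod 2 := fun _ => 1 with hone
    set D : Finset (Fin n → ZMod 2) := C.image (· + one) with hD
    have hinj : Function.Injective (· + one) := add_left_injective one
    have hcardD : D.card = M := by
      rw [hD, Finset.card_image_of_injective _ hinj, hcard]
    have hdisj : Disjoint C D := by
      rw [Finset.disjoint_left]
      intro x hx hxD
      rw [hD, Finset.mem_image] at hxD
      obtain ⟨y, hy, hyx⟩ := hxD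
      have hdist : hammingDist y x = n := by
        rw [← hyx]
        have heq : (Finset.univ.filter fun k => y k ≠ (y + one) k)
            = (Finset.univ : Finset (Fin n)) := by
          apply Finset.filter_true_of_mem
          intro k _
          simp only [Pi.add_apply, hone]
          exact zmod2_ne_add_one (y k)
        rw [hammingDist, heq]
        simp
      have := hdiam y hy x hx
      omega
    have hle : C.card + D.card ≤ 2 ^ n := by
      rw [← Finset.card_union_of_disjoint hdisj]
      calc (C ∪ D).card ≤ (Finset.univ : Finset (Fin n → ZMod 2)).card :=
            Finset.card_le_univ _
        _ = 2 ^ n := by simp [Finset.card_univ]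
    omega
end

section
/- For every integer n ≥ 5, T(n, 3) = n + 1, i.e. the maximum size of an equireplicate binary code of length n with diameter at most 3 is exactly n + 1. -/
/-!
The words `0, e₁, …, eₙ` form an equireplicate code of diameter `2`.

Conversely, let `C` be equireplicate with replication number `r`. If `r ≤ 1` (or `|C| - r ≤ 1`),
every coordinate takes the value `1` (or `0`) in at most one word, so `|C| ≤ n + 1`. Otherwise,
translating `C` by one of its words gives a family `E` of subsets of `[n]` with `∅ ∈ E`, diameter
at most `3`, and all degrees in `{r, |C| - r}`: every degree is at least `2`, and any two degrees
are equal or add up to `|E|`. Let `T` be a largest member; then `|T| ≤ 3`, so (as `n ≥ 5`) two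
points `c ≠ d` lie outside `T`. Each member through `c` is `c` plus a trace on `T` of size
`|T| - 2` or `|T| - 1`, and traces through `c` and through `d` are at distance at most `1`; by
parity, such traces of equal size coincide. If two traces through `c` had equal size, the traces
through `d` would all have the other size and each contain, or each be contained in, both of them,
which is impossible for two of them. So the traces through `c` have distinct sizes and
`deg c = 2`. A point `q` of the larger trace outside the smaller one lies in `T` and in one member
through each of `c`, `d`, and misses `∅` and one member through each of `c`, `d`, so `deg q` is
neither `2` nor `|E| - 2`.
-/

open Finset
open scoped symmDiff

namespace Finset

variable {α : Type*} [DecidableEq α] {a b x y z w T A B : Finset α} {c d : α}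

theorem card_symmDiff (a b : Finset α) : #(a ∆ b) = #(a \ b) + #(b \ a) :=
  card_union_of_disjoint disjoint_sdiff_sdiff

theorem subset_of_card_symmDiff_le_one (h : #(a ∆ b) ≤ 1) (hab : #a ≤ #b) : a ⊆ b := by
  have := card_sdiff_add_card_inter a b
  have := inter_comm a b ▸ card_sdiff_add_card_inter b a
  rw [card_symmDiff] at h
  exact sdiff_eq_empty_iff_subset.1 (card_eq_zero.1 (by omega))

theorem eq_of_card_symmDiff_le_one (h : #(a ∆ b) ≤ 1) (hab : #a = #b) : a = b :=
  eq_of_subset_of_card_le (subset_of_card_symmDiff_le_one h hab.le) hab.ge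

theorem card_inter_lt_of_card_eq (hab : #a = #b) (hne : a ≠ b) : #(a ∩ b) < #a := by
  by_contra! hle
  have hsub : a ⊆ b := inter_eq_left.1 (eq_of_subset_of_card_le inter_subset_left hle)
  exact hne (eq_of_subset_of_card_le hsub hab.ge)

theorem not_union_subset_inter (hxy : x ≠ y) (hx : #x = #y) (hzw : z ≠ w) (hz : #z = #w)
    (hxz : #z ≤ #x + 1) : ¬x ∪ y ⊆ z ∩ w := by
  intro h
  have := card_le_card h
  have := card_inter_lt_of_card_eq hx hxy
  have := card_inter_lt_of_card_eq hz hzw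
  have := card_union_add_card_inter x y
  omega

theorem injOn_card_of_card_symmDiff_le_one {P Q : Finset (Finset α)} {k : ℕ}
    (hP : ∀ a ∈ P, #a ∈ Icc k (k + 1)) (hQ : ∀ b ∈ Q, #b ∈ Icc k (k + 1))
    (hPQ : ∀ a ∈ P, ∀ b ∈ Q, #(a ∆ b) ≤ 1) (hP₂ : 1 < #P) :
    Set.InjOn card (Q : Set (Finset α)) := by
  intro b₁ hb₁ b₂ hb₂ hb
  by_contra hne
  obtain ⟨a₁, ha₁, a₂, ha₂, ha⟩ := one_lt_card.1 hP₂
  have hsize : ∀ a ∈ P, #a ≠ #b₁ := fun a ha h ↦ hne <|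
    (eq_of_card_symmDiff_le_one (hPQ a ha b₁ hb₁) h).symm.trans
      (eq_of_card_symmDiff_le_one (hPQ a ha b₂ hb₂) (h.trans hb))
  have h₁ := mem_Icc.1 (hP a₁ ha₁)
  have h₂ := mem_Icc.1 (hP a₂ ha₂)
  have h₃ := mem_Icc.1 (hQ b₁ hb₁)
  have h₄ := hsize a₂ ha₂
  have hsub : ∀ a ∈ P, ∀ b ∈ Q, #a ≤ #b → a ⊆ b := fun a ha b hb ↦
    subset_of_card_symmDiff_le_one (hPQ a ha b hb)
  have hsup : ∀ a ∈ P, ∀ b ∈ Q, #b ≤ #a → b ⊆ a := fun a ha b hb ↦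
    subset_of_card_symmDiff_le_one (symmDiff_comm a b ▸ hPQ a ha b hb)
  rcases Nat.lt_or_gt_of_ne (hsize a₁ ha₁) with hlt | hlt
  · refine not_union_subset_inter ha (by omega) hne hb (by omega) (union_subset ?_ ?_) <;>
      exact subset_inter (hsub _ ‹_› _ hb₁ (by omega)) (hsub _ ‹_› _ hb₂ (by omega))
  · refine not_union_subset_inter hne hb ha (by omega) (by omega) (union_subset ?_ ?_) <;>
      exact subset_inter (hsup _ ha₁ _ ‹_› (by omega)) (hsup _ ha₂ _ ‹_› (by omega))

theorem exists_lt_of_injOn {β γ : Type*} [LinearOrder γ] {s : Finset β} {f : β → γ}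
    (hf : Set.InjOn f s) (hs : 1 < #s) : ∃ x ∈ s, ∃ y ∈ s, f x < f y := by
  obtain ⟨x, hx, y, hy, hxy⟩ := one_lt_card.1 hs
  rcases lt_or_gt_of_ne ((hf.ne_iff hx hy).2 hxy) with h | h
  exacts [⟨x, hx, y, hy, h⟩, ⟨y, hy, x, hx, h⟩]

theorem card_inter_symmDiff_add_two_le (hA : A \ T = {c}) (hB : B \ T = {d}) (hcd : c ≠ d) :
    #((A ∩ T) ∆ (B ∩ T)) + 2 ≤ #(A ∆ B) := by
  have hcA : c ∈ A \ T := hA ▸ mem_singleton_self c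
  have hdB : d ∈ B \ T := hB ▸ mem_singleton_self d
  have hcB : c ∉ B := fun h ↦ hcd (mem_singleton.1 (hB ▸ mem_sdiff.2 ⟨h, (mem_sdiff.1 hcA).2⟩))
  have hdA : d ∉ A := fun h ↦ hcd (mem_singleton.1 (hA ▸ mem_sdiff.2 ⟨h, (mem_sdiff.1 hdB).2⟩)).symm
  have hout : #{c, d} ≤ #((A ∆ B) \ T) := card_le_card <| by
    simp only [mem_sdiff] at hcA hdB
    simp [insert_subset_iff, mem_symmDiff, *]
  have hinter : (A ∩ T) ∆ (B ∩ T) = A ∆ B ∩ T := by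
    ext
    simp only [mem_symmDiff, mem_inter]
    tauto
  have := card_inter_add_card_sdiff (A ∆ B) T
  rw [card_pair hcd] at hout
  rw [hinter]
  omega

end Finset

namespace SetFamily

variable {α : Type*} [DecidableEq α]

def degree (E : Finset (Finset α)) (i : α) : ℕ := #{A ∈ E | i ∈ A}

variable {E : Finset (Finset α)} {T A B : Finset α} {c d : α}

theorem sdiff_eq_singleton (hdiam : ∀ A ∈ E, ∀ B ∈ E, #(A ∆ B) ≤ 3) (hT : T ∈ E)
    (hmax : ∀ A ∈ E, #A ≤ #T) (hA : A ∈ E) (hcA : c ∈ A) (hc : c ∉ T) : A \ T = {c} := by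
  have h := hdiam A hA T hT
  have := hmax A hA
  have := card_sdiff_add_card_inter A T
  have := inter_comm A T ▸ card_sdiff_add_card_inter T A
  rw [card_symmDiff] at h
  exact eq_singleton_iff_unique_mem.2 ⟨mem_sdiff.2 ⟨hcA, hc⟩,
    fun x hx ↦ card_le_one.1 (by omega) x hx c (mem_sdiff.2 ⟨hcA, hc⟩)⟩

theorem card_inter_mem_Icc (hdiam : ∀ A ∈ E, ∀ B ∈ E, #(A ∆ B) ≤ 3) (hT : T ∈ E)
    (hmax : ∀ A ∈ E, #A ≤ #T) (hA : A ∈ E) (hcA : c ∈ A) (hc : c ∉ T) :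
    #(A ∩ T) ∈ Icc (#T - 2) (#T - 2 + 1) := by
  have h := hdiam A hA T hT
  have := hmax A hA
  have := card_sdiff_add_card_inter A T
  have := inter_comm A T ▸ card_sdiff_add_card_inter T A
  rw [card_symmDiff, sdiff_eq_singleton hdiam hT hmax hA hcA hc, card_singleton] at h
  rw [sdiff_eq_singleton hdiam hT hmax hA hcA hc, card_singleton] at *
  rw [mem_Icc]
  omega

theorem card_inter_symmDiff_inter_le_one (hdiam : ∀ A ∈ E, ∀ B ∈ E, #(A ∆ B) ≤ 3) (hT : T ∈ E)
    (hmax : ∀ A ∈ E, #A ≤ #T) (hA : A ∈ E) (hB : B ∈ E) (hcA : c ∈ A) (hdB : d ∈ B)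
    (hc : c ∉ T) (hd : d ∉ T) (hcd : c ≠ d) : #((A ∩ T) ∆ (B ∩ T)) ≤ 1 := by
  have := card_inter_symmDiff_add_two_le (sdiff_eq_singleton hdiam hT hmax hA hcA hc)
    (sdiff_eq_singleton hdiam hT hmax hB hdB hd) hcd
  have := hdiam A hA B hB
  omega

theorem injOn_inter (hdiam : ∀ A ∈ E, ∀ B ∈ E, #(A ∆ B) ≤ 3) (hT : T ∈ E)
    (hmax : ∀ A ∈ E, #A ≤ #T) (hc : c ∉ T) :
    Set.InjOn (· ∩ T) ({A ∈ E | c ∈ A} : Finset (Finset α)) := by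
  intro A hA B hB h
  simp only [mem_coe, mem_filter] at hA hB
  rw [← sdiff_union_inter A T, ← sdiff_union_inter B T,
    sdiff_eq_singleton hdiam hT hmax hA.1 hA.2 hc, sdiff_eq_singleton hdiam hT hmax hB.1 hB.2 hc]
  exact congrArg _ h

theorem injOn_card_inter (hdiam : ∀ A ∈ E, ∀ B ∈ E, #(A ∆ B) ≤ 3) (hT : T ∈ E)
    (hmax : ∀ A ∈ E, #A ≤ #T) (hc : c ∉ T) (hd : d ∉ T) (hcd : c ≠ d) (hdeg : 2 ≤ degree E d) :
    Set.InjOn (fun A ↦ #(A ∩ T)) ({A ∈ E | c ∈ A} : Finset (Finset α)) := by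
  intro A hA B hB h
  refine injOn_inter hdiam hT hmax hc hA hB ?_
  simp only [mem_coe, mem_filter] at hA hB
  refine injOn_card_of_card_symmDiff_le_one (P := {D ∈ E | d ∈ D}.image (· ∩ T))
    (Q := {A ∩ T, B ∩ T}) (k := #T - 2) ?_ ?_ ?_ ?_ (by simp) (by simp) h
  · simp only [mem_image, mem_filter]
    rintro _ ⟨D, ⟨hD, hdD⟩, rfl⟩
    exact card_inter_mem_Icc hdiam hT hmax hD hdD hd
  · simp only [mem_insert, mem_singleton]
    rintro _ (rfl | rfl)
    exacts [card_inter_mem_Icc hdiam hT hmax hA.1 hA.2 hc,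
      card_inter_mem_Icc hdiam hT hmax hB.1 hB.2 hc]
  · simp only [mem_image, mem_filter, mem_insert, mem_singleton]
    rintro _ ⟨D, ⟨hD, hdD⟩, rfl⟩ _ (rfl | rfl)
    exacts [card_inter_symmDiff_inter_le_one hdiam hT hmax hD hA.1 hdD hA.2 hd hc hcd.symm,
      card_inter_symmDiff_inter_le_one hdiam hT hmax hD hB.1 hdD hB.2 hd hc hcd.symm]
  · rwa [card_image_of_injOn (injOn_inter hdiam hT hmax hd)]

theorem degree_le_two (hdiam : ∀ A ∈ E, ∀ B ∈ E, #(A ∆ B) ≤ 3) (hT : T ∈ E)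
    (hmax : ∀ A ∈ E, #A ≤ #T) (hc : c ∉ T) (hd : d ∉ T) (hcd : c ≠ d) (hdeg : 2 ≤ degree E d) :
    degree E c ≤ 2 := by
  have := card_le_card_of_injOn (t := Icc (#T - 2) (#T - 2 + 1)) _
    (fun A hA ↦ card_inter_mem_Icc hdiam hT hmax (mem_filter.1 hA).1 (mem_filter.1 hA).2 hc)
    (injOn_card_inter hdiam hT hmax hc hd hcd hdeg)
  rw [Nat.card_Icc] at this
  unfold degree
  omega

theorem exists_three_le_degree_and_card_filter_notMem (h0 : ∅ ∈ E)
    (hdiam : ∀ A ∈ E, ∀ B ∈ E, #(A ∆ B) ≤ 3) (hT : T ∈ E) (hmax : ∀ A ∈ E, #A ≤ #T)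
    (hc : c ∉ T) (hd : d ∉ T) (hcd : c ≠ d) (hdegc : 2 ≤ degree E c) (hdegd : 2 ≤ degree E d) :
    ∃ q, 3 ≤ degree E q ∧ 3 ≤ #{A ∈ E | q ∉ A} := by
  obtain ⟨A₁, hA₁, A₂, hA₂, hA⟩ :=
    exists_lt_of_injOn (injOn_card_inter hdiam hT hmax hc hd hcd hdegd) hdegc
  obtain ⟨B₁, hB₁, B₂, hB₂, hB⟩ :=
    exists_lt_of_injOn (injOn_card_inter hdiam hT hmax hd hc hcd.symm hdegc) hdegd
  rw [mem_filter] at hA₁ hA₂ hB₁ hB₂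
  have := mem_Icc.1 (card_inter_mem_Icc hdiam hT hmax hA₁.1 hA₁.2 hc)
  have := mem_Icc.1 (card_inter_mem_Icc hdiam hT hmax hA₂.1 hA₂.2 hc)
  have := mem_Icc.1 (card_inter_mem_Icc hdiam hT hmax hB₁.1 hB₁.2 hd)
  have := mem_Icc.1 (card_inter_mem_Icc hdiam hT hmax hB₂.1 hB₂.2 hd)
  have h₁ : A₁ ∩ T = B₁ ∩ T := eq_of_card_symmDiff_le_one
    (card_inter_symmDiff_inter_le_one hdiam hT hmax hA₁.1 hB₁.1 hA₁.2 hB₁.2 hc hd hcd) (by omega)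
  have h₂ : A₂ ∩ T = B₂ ∩ T := eq_of_card_symmDiff_le_one
    (card_inter_symmDiff_inter_le_one hdiam hT hmax hA₂.1 hB₂.1 hA₂.2 hB₂.2 hc hd hcd) (by omega)
  obtain ⟨q, hqA₂, hqA₁⟩ := exists_mem_notMem_of_card_lt_card hA
  have hqT := (mem_inter.1 hqA₂).2
  have hcB : ∀ B ∈ E, d ∈ B → c ∉ B := fun B hB hdB hcB ↦ hcd <| mem_singleton.1 <|
    sdiff_eq_singleton hdiam hT hmax hB hdB hd ▸ mem_sdiff.2 ⟨hcB, hc⟩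
  refine ⟨q, two_lt_card.2 ⟨T, ?_, A₂, ?_, B₂, ?_, ?_⟩, two_lt_card.2 ⟨∅, ?_, A₁, ?_, B₁, ?_, ?_⟩⟩
  · exact mem_filter.2 ⟨hT, hqT⟩
  · exact mem_filter.2 ⟨hA₂.1, mem_of_mem_inter_left hqA₂⟩
  · exact mem_filter.2 ⟨hB₂.1, mem_of_mem_inter_left (h₂ ▸ hqA₂)⟩
  · exact ⟨(ne_of_mem_of_not_mem' hA₂.2 hc).symm, (ne_of_mem_of_not_mem' hB₂.2 hd).symm,
      ne_of_mem_of_not_mem' hA₂.2 (hcB B₂ hB₂.1 hB₂.2)⟩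
  · exact mem_filter.2 ⟨h0, notMem_empty q⟩
  · exact mem_filter.2 ⟨hA₁.1, fun h ↦ hqA₁ (mem_inter.2 ⟨h, hqT⟩)⟩
  · exact mem_filter.2 ⟨hB₁.1, fun h ↦ hqA₁ (h₁ ▸ mem_inter.2 ⟨h, hqT⟩)⟩
  · exact ⟨(ne_of_mem_of_not_mem' hA₁.2 (notMem_empty c)).symm,
      (ne_of_mem_of_not_mem' hB₁.2 (notMem_empty d)).symm,
      ne_of_mem_of_not_mem' hA₁.2 (hcB B₁ hB₁.1 hB₁.2)⟩

theorem exists_degree_ne_of_diam_le_three [Fintype α] (hα : 5 ≤ Fintype.card α) (h0 : ∅ ∈ E)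
    (hdiam : ∀ A ∈ E, ∀ B ∈ E, #(A ∆ B) ≤ 3) (hdeg : ∀ i, 2 ≤ degree E i) :
    ∃ i j, degree E i ≠ degree E j ∧ degree E i + degree E j ≠ #E := by
  obtain ⟨T, hT, hmax⟩ := E.exists_max_image card ⟨∅, h0⟩
  have hT3 : #T ≤ 3 := symmDiff_bot T ▸ hdiam T hT ∅ h0
  obtain ⟨c, hc, d, hd, hcd⟩ := one_lt_card.1 (show 1 < #Tᶜ by rw [card_compl]; omega)
  rw [mem_compl] at hc hd
  obtain ⟨q, hq, hq'⟩ :=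
    exists_three_le_degree_and_card_filter_notMem h0 hdiam hT hmax hc hd hcd (hdeg c) (hdeg d)
  have := degree_le_two hdiam hT hmax hc hd hcd (hdeg d)
  have := card_filter_add_card_filter_not (s := E) (q ∈ ·)
  exact ⟨c, q, by omega, by unfold degree at *; omega⟩

end SetFamily

namespace BinaryCode

open SetFamily

variable {ι : Type*}

theorem ne_iff_eq_add_one (a b : ZMod 2) : a ≠ b ↔ a = b + 1 := by
  revert a b
  decide

theorem card_le_card_add_one_of_card_filter_le_one [Fintype ι] {C : Finset (ι → ZMod 2)}
    (v : ZMod 2) (h : ∀ i, #{x ∈ C | x i = v} ≤ 1) : #C ≤ Fintype.card ι + 1 := by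
  have hsub : C ⊆ insert (fun _ ↦ v + 1) (univ.biUnion fun i ↦ {x ∈ C | x i = v}) := by
    intro x hx
    by_cases hv : ∃ i, x i = v
    · obtain ⟨i, hi⟩ := hv
      exact mem_insert_of_mem (mem_biUnion.2 ⟨i, mem_univ i, mem_filter.2 ⟨hx, hi⟩⟩)
    · push Not at hv
      exact mem_insert.2 (Or.inl (funext fun i ↦ (ne_iff_eq_add_one _ _).1 (hv i)))
  calc #C ≤ #(univ.biUnion fun i ↦ {x ∈ C | x i = v}) + 1 :=
        (card_le_card hsub).trans (card_insert_le _ _)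
    _ ≤ ∑ _ : ι, 1 + 1 := by
        gcongr
        exact card_biUnion_le.trans (sum_le_sum fun i _ ↦ h i)
    _ = Fintype.card ι + 1 := by simp

theorem card_filter_eq_zero_add_card_filter_eq_one (C : Finset (ι → ZMod 2)) (i : ι) :
    #{x ∈ C | x i = 0} + #{x ∈ C | x i = 1} = #C := by
  have h : (1 : ZMod 2) + 1 = 0 := rfl
  rw [add_comm, ← card_filter_add_card_filter_not (s := C) (fun x ↦ x i = 1)]
  simp [ne_iff_eq_add_one, h]

def diffSupport [Fintype ι] (x₀ y : ι → ZMod 2) : Finset ι := {i | y i ≠ x₀ i}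

theorem diffSupport_self [Fintype ι] (x₀ : ι → ZMod 2) : diffSupport x₀ x₀ = ∅ := by
  simp [diffSupport]

theorem diffSupport_injective [Fintype ι] (x₀ : ι → ZMod 2) :
    Function.Injective (diffSupport x₀) := by
  intro y z h
  have key : ∀ a b c : ZMod 2, (a ≠ c ↔ b ≠ c) → a = b := by decide
  funext i
  exact key _ _ (x₀ i) (by simpa [diffSupport] using congrArg (i ∈ ·) h)

theorem card_diffSupport_symmDiff [Fintype ι] [DecidableEq ι] (x₀ y z : ι → ZMod 2) :
    #(diffSupport x₀ y ∆ diffSupport x₀ z) = hammingDist y z := by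
  have key : ∀ a b c : ZMod 2, (a ≠ c ∧ ¬b ≠ c ∨ b ≠ c ∧ ¬a ≠ c) ↔ a ≠ b := by decide
  unfold hammingDist diffSupport
  congr 1
  ext i
  simpa [mem_symmDiff] using key (y i) (z i) (x₀ i)

theorem degree_image_diffSupport [Fintype ι] [DecidableEq ι] (C : Finset (ι → ZMod 2))
    (x₀ : ι → ZMod 2) (i : ι) :
    degree (C.image (diffSupport x₀)) i = #{y ∈ C | y i ≠ x₀ i} := by
  rw [degree, filter_image, card_image_of_injective _ (diffSupport_injective x₀)]
  simp [diffSupport]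

theorem card_le_of_equireplicate {n : ℕ} (hn : 5 ≤ n) {C : Finset (Fin n → ZMod 2)}
    (hC : Equireplicate n C) (hdiam : ∀ x ∈ C, ∀ y ∈ C, hammingDist x y ≤ 3) : #C ≤ n + 1 := by
  obtain ⟨r, hr⟩ := hC
  have hcompl : ∀ i, #{x ∈ C | x i = 0} + r = #C := fun i ↦
    hr i ▸ card_filter_eq_zero_add_card_filter_eq_one C i
  by_cases hr₁ : r ≤ 1
  · simpa using card_le_card_add_one_of_card_filter_le_one (C := C) 1 fun i ↦ (hr i).trans_le hr₁
  by_cases hr₂ : #C ≤ r + 1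
  · simpa using card_le_card_add_one_of_card_filter_le_one (C := C) 0 fun i ↦ by
      have := hcompl i
      omega
  obtain ⟨x₀, hx₀⟩ : C.Nonempty := nonempty_iff_ne_empty.2 (by rintro rfl; simp at hr₂)
  set E := C.image (diffSupport x₀)
  have hdeg : ∀ i, degree E i = r ∨ degree E i + r = #C := by
    intro i
    rw [degree_image_diffSupport]
    obtain h | h : x₀ i = 0 ∨ x₀ i = 1 := by generalize x₀ i = a; revert a; decide
    · exact Or.inl (by simpa [h, ne_iff_eq_add_one] using hr i)
    · exact Or.inr (by rw [h, ← hr i, add_comm]; exact card_filter_add_card_filter_not _)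
  have hE : #E = #C := card_image_of_injective _ (diffSupport_injective x₀)
  obtain ⟨i, j, hij, hij'⟩ := exists_degree_ne_of_diam_le_three (E := E) (by simpa)
    (mem_image.2 ⟨x₀, hx₀, diffSupport_self x₀⟩)
    (by simpa only [E, forall_mem_image, card_diffSupport_symmDiff] using hdiam)
    (fun i ↦ by rcases hdeg i with h | h <;> omega)
  rcases hdeg i with h | h <;> rcases hdeg j with h' | h' <;> omega

theorem succ_mem_equireplicateCodeSizes {n w : ℕ} (hw : 2 ≤ w) :
    n + 1 ∈ equireplicateCodeSizes n w := by
  set e : Fin n → Fin n → ZMod 2 := fun i ↦ Pi.single i 1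
  have he : Function.Injective e := fun i j h ↦
    (by simpa [e, Pi.single_apply] using congrFun h j : j = i).symm
  have hnorm : ∀ x ∈ insert 0 (univ.image e), hammingNorm x ≤ 1 := by
    simp only [forall_mem_insert, hammingNorm_zero, zero_le, forall_mem_image, true_and]
    intro i _
    exact card_le_one.2 fun a ha b hb ↦ by simp_all [e, Pi.single_apply]
  refine ⟨insert 0 (univ.image e), ⟨1, fun i ↦ ?_⟩, fun x hx y hy ↦ ?_, ?_⟩
  · simp [e, filter_insert, filter_image, Pi.single_apply, filter_eq]
  · calc hammingDist x y ≤ hammingDist x 0 + hammingDist 0 y := hammingDist_triangle x 0 y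
      _ ≤ w := by
        rw [hammingDist_zero_right, hammingDist_zero_left]
        have := hnorm x hx
        have := hnorm y hy
        omega
  · rw [card_insert_of_notMem (by simp [e]), card_image_of_injective _ he, card_univ,
      Fintype.card_fin]

end BinaryCode

theorem stmt_2 (n : ℕ) (hn : 5 ≤ n) :
    IsGreatest (equireplicateCodeSizes n 3) (n + 1) := by
  refine ⟨BinaryCode.succ_mem_equireplicateCodeSizes (by norm_num), ?_⟩
  rintro M ⟨C, hC, hdiam, rfl⟩
  exact BinaryCode.card_le_of_equireplicate hn hC hdiam
end

section
/- Let n and t be positive integers with t < n, and let C = {C_1,…,C_M} be an (n,t)-cooling code of size M. Then M ≤ 2^{n−t}. -/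
/-! Fix a set `S` of `t` coordinates. Every codeset contains a vector vanishing on `S`, and
the codesets are disjoint, so choosing one such vector per codeset gives `M` distinct vectors
supported on the `n - t` coordinates outside `S`; there are only `|F| ^ (n - t)` of those. -/

/-- An `(n,t)`-cooling code of size `M` over coefficients `F`: `M` pairwise disjoint
subsets (codesets) of `F^n` such that for every `t`-subset `S` of coordinates and every
codeset, some vector in the codeset has support disjoint from `S`. -/
def IsCoolingCode (F : Type*) [Zero F] (n t M : ℕ)
    (C : Fin M → Set (Fin n → F)) : Prop :=
  (∀ i j : Fin M, i ≠ j → Disjoint (C i) (C j)) ∧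
  ∀ S : Finset (Fin n), S.card = t → ∀ i : Fin M,
    ∃ x ∈ C i, ∀ j ∈ S, x j = 0

open Function

lemma Pairwise.injective_of_disjoint_of_mem {ι α : Type*} {C : ι → Set α} {x : ι → α}
    (hC : Pairwise (Disjoint on C)) (hx : ∀ i, x i ∈ C i) : Injective x :=
  pairwise_ne_iff_injective.mp fun _ _ hij => (hC hij).ne_of_mem (hx _) (hx _)

lemma injOn_restrict_compl_of_vanishing {F ι : Type*} [Zero F] [Fintype ι] [DecidableEq ι]
    (S : Finset ι) :
    Set.InjOn (fun (x : ι → F) (j : (Sᶜ : Finset ι)) => x j) {x | ∀ j ∈ S, x j = 0} := by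
  intro x hx y hy hxy
  funext j
  by_cases hj : j ∈ S
  · rw [hx j hj, hy j hj]
  · exact congrFun hxy ⟨j, Finset.mem_compl.mpr hj⟩

theorem IsCoolingCode.le_card_pow {F : Type*} [Zero F] [Fintype F] {n t M : ℕ}
    {C : Fin M → Set (Fin n → F)} (hC : IsCoolingCode F n t M C) (htn : t ≤ n) :
    M ≤ Fintype.card F ^ (n - t) := by
  obtain ⟨hdisj, hcool⟩ := hC
  obtain ⟨S, -, hS⟩ := Finset.exists_subset_card_eq (s := (Finset.univ : Finset (Fin n)))
    (by simpa using htn)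
  choose x hxC hxS using hcool S hS
  have hx : Injective x := Pairwise.injective_of_disjoint_of_mem hdisj hxC
  have hrestrict : Injective ((fun (y : Fin n → F) (j : (Sᶜ : Finset (Fin n))) => y j) ∘ x) :=
    ((injOn_restrict_compl_of_vanishing S).injective_iff _ (Set.range_subset_iff.2 hxS)).2 hx
  simpa [Finset.card_compl, hS] using Fintype.card_le_of_injective _ hrestrict

theorem stmt_4_general (n t M : ℕ) (htn : t < n)
    (C : Fin M → Set (Fin n → ZMod 2))
    (hC : IsCoolingCode (ZMod 2) n t M C) :
    M ≤ 2 ^ (n - t) := by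
  simpa using hC.le_card_pow htn.le

theorem stmt_4 (n t M : ℕ) (ht : 0 < t) (htn : t < n)
    (C : Fin M → Set (Fin n → ZMod 2))
    (hC : IsCoolingCode (ZMod 2) n t M C) :
    M ≤ 2 ^ (n - t) :=
  stmt_4_general n t M htn C hC
end

section
/- Let n and t be positive integers with 1 < t < n − 1. Then there is no perfect (n,t)-cooling code, i.e. no (n,t)-cooling code of size exactly 2^{n−t} exists. -/
lemma cube_card {n : ℕ} (T : Finset (Fin n)) :
    Fintype.card {x : Fin n → ZMod 2 // ∀ j ∉ T, x j = 0} = 2 ^ T.card := by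
  have e : {x : Fin n → ZMod 2 // ∀ j ∉ T, x j = 0} ≃ (T → ZMod 2) :=
    { toFun := fun x j => x.1 j.1
      invFun := fun y => ⟨fun j => if h : j ∈ T then y ⟨j, h⟩ else 0, fun j hj => dif_neg hj⟩
      left_inv := fun x => by
        ext j
        by_cases h : j ∈ T
        · simp [h]
        · simp [h, x.2 j h]
      right_inv := fun y => by
        ext j
        simp [j.2] }
  rw [Fintype.card_congr e]
  simp [ZMod.card]

section key
variable {n t : ℕ} {C : Fin (2 ^ (n - t)) → Set (Fin n → ZMod 2)}

lemma key_bij (htn : t ≤ n)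
    (hdisj : ∀ i j : Fin (2 ^ (n - t)), i ≠ j → Disjoint (C i) (C j))
    {T : Finset (Fin n)} (hT : T.card = n - t)
    (g : Fin (2 ^ (n - t)) → {x : Fin n → ZMod 2 // ∀ j ∉ T, x j = 0})
    (hg : ∀ i, (g i).1 ∈ C i) : Function.Bijective g := by
  have hinj : Function.Injective g := by
    intro i j hij
    by_contra hne
    exact Set.disjoint_left.mp (hdisj i j hne) (hg i) (hij ▸ hg j)
  rw [Fintype.bijective_iff_injective_and_card]
  exact ⟨hinj, by rw [cube_card, hT, Fintype.card_fin]⟩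

lemma key_choice (htn : t ≤ n)
    (hcov : ∀ S : Finset (Fin n), S.card = t → ∀ i : Fin (2 ^ (n - t)),
      ∃ x ∈ C i, ∀ j ∈ S, x j = 0)
    {T : Finset (Fin n)} (hT : T.card = n - t) (i : Fin (2 ^ (n - t))) :
    ∃ x, x ∈ C i ∧ ∀ j ∉ T, x j = 0 := by
  have hTc : Tᶜ.card = t := by
    rw [Finset.card_compl, hT, Fintype.card_fin]
    omega
  obtain ⟨x, hx, hx0⟩ := hcov Tᶜ hTc i
  exact ⟨x, hx, fun j hj => hx0 j (Finset.mem_compl.mpr hj)⟩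

lemma key_cover (htn : t ≤ n)
    (hdisj : ∀ i j : Fin (2 ^ (n - t)), i ≠ j → Disjoint (C i) (C j))
    (hcov : ∀ S : Finset (Fin n), S.card = t → ∀ i : Fin (2 ^ (n - t)),
      ∃ x ∈ C i, ∀ j ∈ S, x j = 0)
    {T : Finset (Fin n)} (hT : T.card = n - t)
    (y : Fin n → ZMod 2) (hy : ∀ j ∉ T, y j = 0) : ∃ i, y ∈ C i := by
  choose g hg1 hg2 using key_choice htn hcov hT (C := C)
  have hb := key_bij htn hdisj hT (fun i => ⟨g i, hg2 i⟩) hg1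
  obtain ⟨i, hi⟩ := hb.2 ⟨y, hy⟩
  exact ⟨i, by rw [show y = g i from (congrArg Subtype.val hi).symm]; exact hg1 i⟩

lemma key_unique (htn : t ≤ n)
    (hdisj : ∀ i j : Fin (2 ^ (n - t)), i ≠ j → Disjoint (C i) (C j))
    (hcov : ∀ S : Finset (Fin n), S.card = t → ∀ i : Fin (2 ^ (n - t)),
      ∃ x ∈ C i, ∀ j ∈ S, x j = 0)
    {T : Finset (Fin n)} (hT : T.card = n - t)
    {i : Fin (2 ^ (n - t))} {x y : Fin n → ZMod 2}
    (hxC : x ∈ C i) (hyC : y ∈ C i)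
    (hx : ∀ j ∉ T, x j = 0) (hy : ∀ j ∉ T, y j = 0) : x = y := by
  choose g hg1 hg2 using key_choice htn hcov hT (C := C)
  set G : Fin (2 ^ (n - t)) → {z : Fin n → ZMod 2 // ∀ j ∉ T, z j = 0} :=
    fun j => if h : j = i then ⟨x, hx⟩ else ⟨g j, hg2 j⟩ with hG
  have hGmem : ∀ j, (G j).1 ∈ C j := by
    intro j
    by_cases h : j = i
    · simp [hG, h, hxC]
    · simp [hG, h, hg1 j]
  have hb := key_bij htn hdisj hT G hGmem
  obtain ⟨j, hj⟩ := hb.2 ⟨y, hy⟩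
  have hyGj : y = (G j).1 := (congrArg Subtype.val hj).symm
  have hji : j = i := by
    by_contra hne
    exact Set.disjoint_left.mp (hdisj j i hne) (hyGj ▸ hGmem j) hyC
  rw [hyGj, hji]
  simp [hG]
end key


theorem stmt_5 (n t : ℕ) (ht : 1 < t) (htn : t < n - 1) :
    ¬ ∃ C : Fin (2 ^ (n - t)) → Set (Fin n → ZMod 2),
      IsCoolingCode (ZMod 2) n t (2 ^ (n - t)) C := by
  rintro ⟨C, hdisj, hcov⟩
  have hk2 : 2 ≤ n - t := by omega
  have hkn : (n - t) + 2 ≤ n := by omega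
  have htn' : t ≤ n := by omega
  -- coordinates
  set a : Fin n := ⟨n - t, by omega⟩ with ha
  set b : Fin n := ⟨(n - t) + 1, by omega⟩ with hb
  have hab : a ≠ b := by simp [ha, hb, Fin.ext_iff]
  -- base cube T0 = first k coordinates
  set T0 : Finset (Fin n) := Finset.Iio a with hT0
  have hmemT0 : ∀ j : Fin n, j ∈ T0 ↔ (j : ℕ) < n - t := by
    intro j; simp [hT0, Fin.lt_def, ha]
  have hcardT0 : T0.card = n - t := by
    rw [hT0, Fin.card_Iio, ha]
  have haT0 : a ∉ T0 := by simp [hmemT0, ha]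
  have hbT0 : b ∉ T0 := by simp [hmemT0, hb]
  -- unit vectors
  set ea : Fin n → ZMod 2 := fun j => if j = a then 1 else 0 with hea
  set eb : Fin n → ZMod 2 := fun j => if j = b then 1 else 0 with heb
  set oneT0 : Fin n → ZMod 2 := fun j => if j ∈ T0 then 1 else 0 with honeT0
  have hzmod : ∀ x : ZMod 2, x = 0 ∨ x = 1 := by decide
  have h10 : (1 : ZMod 2) ≠ 0 := by decide
  -- two distinct elements of T0
  set m0 : Fin n := ⟨0, by omega⟩ with hm0
  set m1 : Fin n := ⟨1, by omega⟩ with hm1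
  have hm0T0 : m0 ∈ T0 := by simp [hmemT0, hm0]; omega
  have hm1T0 : m1 ∈ T0 := by simp [hmemT0, hm1]; omega
  have hm01 : m1 ≠ m0 := by simp [hm0, hm1, Fin.ext_iff]
  -- cube containing c together with T0 minus m  (for c ∉ T0, m ∈ T0)
  have cube_card' : ∀ (c : Fin n), c ∉ T0 → ∀ m ∈ T0,
      (insert c (T0.erase m)).card = n - t := by
    intro c hc m hm
    rw [Finset.card_insert_of_notMem (fun h => hc (Finset.mem_of_mem_erase h)),
      Finset.card_erase_of_mem hm, hcardT0]
    omega
  -- step: the codeset containing e_c (c ∉ T0) also contains oneT0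
  have main : ∀ (c : Fin n), c ∉ T0 →
      ∃ i, (fun j => if j = c then (1 : ZMod 2) else 0) ∈ C i ∧ oneT0 ∈ C i := by
    intro c hc
    obtain ⟨ec, hec⟩ : ∃ ec : Fin n → ZMod 2,
        ec = fun j => if j = c then 1 else 0 := ⟨_, rfl⟩
    have hec_supp : ∀ m ∈ T0, ∀ j ∉ insert c (T0.erase m), ec j = 0 := by
      intro m _ j hj
      have hjc : j ≠ c := by
        rintro rfl
        exact hj (Finset.mem_insert_self j _)
      simp [hec, hjc]
    obtain ⟨i, hi⟩ := key_cover htn' hdisj hcov (cube_card' c hc m0 hm0T0) ec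
      (hec_supp m0 hm0T0)
    obtain ⟨u, huC, hu⟩ := key_choice htn' hcov hcardT0 i
    refine ⟨i, hec ▸ hi, ?_⟩
    have hu_eq : u = oneT0 := by
      funext j
      by_cases hj : j ∈ T0
      · simp only [honeT0, if_pos hj]
        rcases hzmod (u j) with h0 | h1
        · exfalso
          -- u is supported in insert c (T0.erase j), so u = ec, contradiction
          have hu_supp : ∀ m ∉ insert c (T0.erase j), u m = 0 := by
            intro m hm
            by_cases hmT0 : m ∈ T0
            · have : m = j := by
                by_contra hmj
                exact hm (Finset.mem_insert_of_mem (Finset.mem_erase.mpr ⟨hmj, hmT0⟩))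
              rw [this]; exact h0
            · exact hu m hmT0
          have := key_unique htn' hdisj hcov (cube_card' c hc j hj) huC hi hu_supp
            (hec_supp j hj)
          have huc := hu c hc
          rw [this, hec] at huc
          simp at huc
        · exact h1
      · simp only [honeT0, if_neg hj, hu j hj]
    rw [← hu_eq]; exact huC
  obtain ⟨ia, hiaE, hiaO⟩ := main a haT0
  obtain ⟨ib, hibE, hibO⟩ := main b hbT0
  have hiab : ia = ib := by
    by_contra hne
    exact Set.disjoint_left.mp (hdisj ia ib hne) hiaO hibO
  -- now ea and eb both lie in C ia and both are supported in a common cube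
  obtain ⟨T1, hT1⟩ : ∃ T1 : Finset (Fin n),
      T1 = insert a (insert b ((T0.erase m0).erase m1)) := ⟨_, rfl⟩
  have haT1 : a ∉ insert b ((T0.erase m0).erase m1) := by
    intro h
    rcases Finset.mem_insert.mp h with h | h
    · exact hab h
    · exact haT0 (Finset.mem_of_mem_erase (Finset.mem_of_mem_erase h))
  have hbT1 : b ∉ (T0.erase m0).erase m1 :=
    fun h => hbT0 (Finset.mem_of_mem_erase (Finset.mem_of_mem_erase h))
  have hcardT1 : T1.card = n - t := by
    rw [hT1, Finset.card_insert_of_notMem haT1, Finset.card_insert_of_notMem hbT1,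
      Finset.card_erase_of_mem (Finset.mem_erase.mpr ⟨hm01, hm1T0⟩),
      Finset.card_erase_of_mem hm0T0, hcardT0]
    omega
  have heab : ea = eb := by
    apply key_unique htn' hdisj hcov hcardT1 hiaE (hiab ▸ hibE)
    · intro j hj
      have hja : j ≠ a := by
        rintro rfl
        exact hj (by rw [hT1]; exact Finset.mem_insert_self a _)
      simp [hea, hja]
    · intro j hj
      have hjb : j ≠ b := by
        rintro rfl
        exact hj (by
          rw [hT1]
          exact Finset.mem_insert_of_mem (Finset.mem_insert_self b _))
      simp [heb, hjb]
  have : (1 : ZMod 2) = 0 := by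
    have := congrFun heab a
    simpa [hea, heb, hab] using this
  exact h10 this
end

section
/- Let n and t be positive integers with 1 < t < n − 1. Then every (n,t)-cooling code C satisfies |C| ≤ 2^{n−t} − 1. -/
/-! Choosing in each codeset a vector that vanishes on a fixed `t`-set `S` injects the code into
the `q ^ (n - t)` vectors vanishing on `S`, so `M ≤ q ^ (n - t)`. If equality held, then for every
`t`-set `S` each codeset would contain exactly one vector vanishing on `S`, and every such vector
would lie in some codeset. Now fix a set `Z` of `t + 2` coordinates and take the vectors with at
most one nonzero entry in `Z`: any two of them vanish together on `t` coordinates of `Z`, so they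
lie in distinct codesets. There are `(1 + (t + 2)(q - 1)) q ^ (n - t - 2)` of them, which exceeds
`q ^ (n - t)` as soon as `2 ≤ q ≤ t`. -/

open Finset Function

section Vanishing

variable {ι : Type*} [Fintype ι] [DecidableEq ι] (F : Type*) [Zero F] [Fintype F]

def vanishingOn (S : Finset ι) : Finset (ι → F) :=
  Fintype.piFinset fun j => if j ∈ S then {0} else univ

variable {F}

@[simp]
theorem mem_vanishingOn {S : Finset ι} {x : ι → F} : x ∈ vanishingOn F S ↔ ∀ j ∈ S, x j = 0 := by
  simp only [vanishingOn, Fintype.mem_piFinset]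
  refine forall_congr' fun j => ?_
  split_ifs with hj <;> simp [hj]

theorem vanishingOn_anti {S S' : Finset ι} (h : S ⊆ S') : vanishingOn F S' ⊆ vanishingOn F S :=
  fun _ hx => mem_vanishingOn.2 fun j hj => mem_vanishingOn.1 hx j (h hj)

theorem card_vanishingOn (S : Finset ι) :
    #(vanishingOn F S) = Fintype.card F ^ (Fintype.card ι - #S) := by
  rw [vanishingOn, Fintype.card_piFinset]
  simp only [apply_ite, card_singleton, card_univ, prod_ite, subset_univ, filter_mem_eq_of_subset,
    prod_const_one, prod_const, one_mul]
  rw [← sdiff_eq_filter, ← compl_eq_univ_sdiff, card_compl]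

end Vanishing

section DisjointFamily

variable {α κ : Type*} {C : κ → Set α} {V : Finset α}

theorem exists_injective_mem_of_pairwise_disjoint (hC : Pairwise (Disjoint on C))
    (hV : ∀ i, ∃ x ∈ V, x ∈ C i) : ∃ f : κ → α, Injective f ∧ ∀ i, f i ∈ V ∧ f i ∈ C i := by
  choose f hfV hfC using hV
  refine ⟨f, fun i j hij => ?_, fun i => ⟨hfV i, hfC i⟩⟩
  by_contra hne
  exact Set.disjoint_left.1 (hC hne) (hfC i) (hij ▸ hfC j)

theorem card_le_card_of_pairwise_disjoint [Fintype κ] (hC : Pairwise (Disjoint on C))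
    (hV : ∀ i, ∃ x ∈ V, x ∈ C i) : Fintype.card κ ≤ #V := by
  classical
  obtain ⟨f, hf, hfV⟩ := exists_injective_mem_of_pairwise_disjoint hC hV
  rw [← card_univ, ← card_image_of_injective univ hf]
  exact card_le_card fun x hx => by
    obtain ⟨i, -, rfl⟩ := mem_image.1 hx
    exact (hfV i).1

theorem exists_mem_surjOn_of_card_eq [Fintype κ] (hC : Pairwise (Disjoint on C))
    (hV : ∀ i, ∃ x ∈ V, x ∈ C i) (hcard : Fintype.card κ = #V) :
    ∃ f : κ → α, (∀ i, f i ∈ C i) ∧ Set.SurjOn f Set.univ V := by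
  classical
  obtain ⟨f, hf, hfV⟩ := exists_injective_mem_of_pairwise_disjoint hC hV
  have himage : univ.image f = V :=
    eq_of_subset_of_card_le (fun x hx => by
      obtain ⟨i, -, rfl⟩ := mem_image.1 hx
      exact (hfV i).1) (by rw [card_image_of_injective univ hf, card_univ, hcard])
  exact ⟨f, fun i => (hfV i).2, fun x hx => by simpa [← himage] using hx⟩

theorem subset_iUnion_of_card_eq [Fintype κ] (hC : Pairwise (Disjoint on C))
    (hV : ∀ i, ∃ x ∈ V, x ∈ C i) (hcard : Fintype.card κ = #V) : ↑V ⊆ ⋃ i, C i := by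
  obtain ⟨f, hfC, hf⟩ := exists_mem_surjOn_of_card_eq hC hV hcard
  intro x hx
  obtain ⟨i, -, rfl⟩ := hf hx
  exact Set.mem_iUnion_of_mem i (hfC i)

theorem subsingleton_inter_of_card_eq [Fintype κ] (hC : Pairwise (Disjoint on C))
    (hV : ∀ i, ∃ x ∈ V, x ∈ C i) (hcard : Fintype.card κ = #V) (i : κ) :
    (C i ∩ ↑V).Subsingleton := by
  obtain ⟨f, hfC, hf⟩ := exists_mem_surjOn_of_card_eq hC hV hcard
  suffices h : ∀ x ∈ C i ∩ ↑V, x = f i from fun x hx y hy => (h x hx).trans (h y hy).symm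
  rintro x ⟨hxC, hxV⟩
  obtain ⟨j, -, rfl⟩ := hf hxV
  by_contra hne
  exact Set.disjoint_left.1 (hC (ne_of_apply_ne f hne)) (hfC j) hxC

end DisjointFamily

section Spike

variable {ι F : Type*} [DecidableEq ι] [Zero F] {Z : Finset ι}

def spike (Z : Finset ι) : Option (Z × {c : F // c ≠ 0}) → (ι → F) → ι → F
  | none, v => v
  | some (a, c), v => update v a c

variable [Fintype ι] [Fintype F]

theorem exists_subset_spike_mem_vanishingOn (o : Option (Z × {c : F // c ≠ 0})) {v : ι → F}
    (hv : v ∈ vanishingOn F Z) : ∃ S ⊆ Z, #Z ≤ #S + 1 ∧ spike Z o v ∈ vanishingOn F S := by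
  rcases o with _ | ⟨a, c⟩
  · exact ⟨Z, Subset.rfl, by omega, hv⟩
  · refine ⟨Z.erase a, erase_subset _ _, (card_erase_add_one a.2).ge, ?_⟩
    simp only [mem_vanishingOn, mem_erase] at hv ⊢
    rintro j ⟨hja, hj⟩
    simp [spike, hja, hv j hj]

theorem spike_injective :
    Injective fun p : Option (Z × {c : F // c ≠ 0}) × vanishingOn F Z => spike Z p.1 p.2 := by
  rintro ⟨o, v, hv⟩ ⟨o', v', hv'⟩ h
  rw [mem_vanishingOn] at hv hv'
  simp only at h
  rcases o with _ | ⟨⟨a, ha⟩, c, hc⟩ <;> rcases o' with _ | ⟨⟨a', ha'⟩, c', hc'⟩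
  · simp_all [spike]
  · exact (hc' (by simpa [spike, hv a' ha'] using (congrFun h a').symm)).elim
  · exact (hc (by simpa [spike, hv' a ha] using congrFun h a)).elim
  · have hval := congrFun h a
    obtain rfl : a = a' := by
      by_contra hne
      exact hc (by simpa [spike, hne, hv' a ha] using hval)
    obtain rfl : c = c' := by simpa [spike] using hval
    have hvv : v = v' := by
      funext j
      by_cases hj : j = a
      · rw [hj, hv a ha, hv' a ha]
      · simpa [spike, hj] using congrFun h j
    simp [hvv]

end Spike

namespace IsCoolingCode

variable {F : Type*} [Zero F] [Fintype F] {n t M : ℕ} {C : Fin M → Set (Fin n → F)}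

omit [Fintype F] in
theorem pairwise_disjoint (hC : IsCoolingCode F n t M C) : Pairwise (Disjoint on C) :=
  fun i j hij => hC.1 i j hij

theorem exists_mem_vanishingOn (hC : IsCoolingCode F n t M C) {S : Finset (Fin n)}
    (hS : #S = t) (i : Fin M) : ∃ x ∈ vanishingOn F S, x ∈ C i := by
  obtain ⟨x, hxC, hx⟩ := hC.2 S hS i
  exact ⟨x, mem_vanishingOn.2 hx, hxC⟩

theorem card_le (hC : IsCoolingCode F n t M C) (ht : t ≤ n) : M ≤ Fintype.card F ^ (n - t) := by
  obtain ⟨S, -, hS⟩ := exists_subset_card_eq (s := (univ : Finset (Fin n))) (by simpa using ht)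
  simpa [card_vanishingOn, hS] using
    card_le_card_of_pairwise_disjoint hC.pairwise_disjoint (hC.exists_mem_vanishingOn hS)

theorem exists_mem_of_card_eq (hC : IsCoolingCode F n t M C) (hM : M = Fintype.card F ^ (n - t))
    {S : Finset (Fin n)} (hS : t ≤ #S) {x : Fin n → F} (hx : x ∈ vanishingOn F S) :
    ∃ i, x ∈ C i := by
  obtain ⟨S', hS'S, hS'⟩ := exists_subset_card_eq hS
  simpa using subset_iUnion_of_card_eq hC.pairwise_disjoint (hC.exists_mem_vanishingOn hS')
    (by simp [card_vanishingOn, hS', hM]) (vanishingOn_anti hS'S hx)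

theorem eq_of_mem_of_card_eq (hC : IsCoolingCode F n t M C) (hM : M = Fintype.card F ^ (n - t))
    {S : Finset (Fin n)} (hS : t ≤ #S) {x y : Fin n → F} (hx : x ∈ vanishingOn F S)
    (hy : y ∈ vanishingOn F S) {i : Fin M} (hxi : x ∈ C i) (hyi : y ∈ C i) : x = y := by
  obtain ⟨S', hS'S, hS'⟩ := exists_subset_card_eq hS
  exact subsingleton_inter_of_card_eq hC.pairwise_disjoint (hC.exists_mem_vanishingOn hS')
    (by simp [card_vanishingOn, hS', hM]) i ⟨hxi, vanishingOn_anti hS'S hx⟩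
    ⟨hyi, vanishingOn_anti hS'S hy⟩

theorem card_spike_domain_le_of_card_eq [DecidableEq F] (hC : IsCoolingCode F n t M C)
    (hM : M = Fintype.card F ^ (n - t)) {Z : Finset (Fin n)} (hZ : #Z = t + 2) :
    Fintype.card (Option (Z × {c : F // c ≠ 0}) × vanishingOn F Z) ≤ M := by
  have hex (p : Option (Z × {c : F // c ≠ 0}) × vanishingOn F Z) : ∃ i, spike Z p.1 p.2 ∈ C i := by
    obtain ⟨S, -, hS, hp⟩ := exists_subset_spike_mem_vanishingOn p.1 p.2.2
    exact hC.exists_mem_of_card_eq hM (by omega) hp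
  choose Φ hΦ using hex
  suffices Injective Φ by simpa using Fintype.card_le_of_injective Φ this
  intro p p' h
  obtain ⟨S, hSZ, hS, hp⟩ := exists_subset_spike_mem_vanishingOn p.1 p.2.2
  obtain ⟨S', hS'Z, hS', hp'⟩ := exists_subset_spike_mem_vanishingOn p'.1 p'.2.2
  have hcommon : #Z ≤ #(S ∩ S') + 2 := by
    have := card_union_add_card_inter S S'
    have := card_le_card (union_subset hSZ hS'Z)
    omega
  apply spike_injective
  exact hC.eq_of_mem_of_card_eq hM (S := S ∩ S') (by omega) (vanishingOn_anti inter_subset_left hp)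
    (vanishingOn_anti inter_subset_right hp') (hΦ p) (h ▸ hΦ p')

theorem card_lt [DecidableEq F] [Nontrivial F] (hC : IsCoolingCode F n t M C)
    (hq : Fintype.card F ≤ t) (htn : t + 2 ≤ n) : M < Fintype.card F ^ (n - t) := by
  refine (hC.card_le (by omega)).lt_of_ne fun hM => ?_
  obtain ⟨Z, -, hZ⟩ := exists_subset_card_eq (s := (univ : Finset (Fin n))) (by simpa using htn)
  have h := hC.card_spike_domain_le_of_card_eq hM hZ
  have hnonzero : Fintype.card {c : F // c ≠ 0} = Fintype.card F - 1 := Set.card_ne_eq 0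
  rw [Fintype.card_prod, Fintype.card_option, Fintype.card_prod, Fintype.card_coe,
    Fintype.card_coe, card_vanishingOn, hZ, hM, hnonzero, Fintype.card_fin,
    show n - t = n - (t + 2) + 2 by omega, pow_add] at h
  have hq2 : 2 ≤ Fintype.card F := Fintype.one_lt_card
  have hsq : (t + 2) * (Fintype.card F - 1) + 1 ≤ Fintype.card F ^ 2 :=
    Nat.le_of_mul_le_mul_right (by rwa [mul_comm (Fintype.card F ^ _)] at h) (by positivity)
  obtain ⟨r, hr⟩ := Nat.exists_eq_add_one_of_ne_zero (by omega : Fintype.card F ≠ 0)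
  rw [hr, Nat.add_sub_cancel] at hsq
  nlinarith

end IsCoolingCode

theorem stmt_6 (n t : ℕ) (ht : 1 < t) (htn : t < n - 1) (M : ℕ)
    (C : Fin M → Set (Fin n → ZMod 2))
    (hC : IsCoolingCode (ZMod 2) n t M C) :
    M ≤ 2 ^ (n - t) - 1 := by
  have h := hC.card_lt (by rw [ZMod.card]; omega) (by omega)
  rw [ZMod.card] at h
  omega
end

section
/- For every integer n ≥ 2, C(n,1) = 2^{n−1} and C(n, n−1) = 2, i.e. the maximum size of an (n,1)-cooling code is 2^{n−1} and the maximum size of an (n,n−1)-cooling code is 2. -/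
/-- The set of sizes of `(n,t)`-cooling codes; `C(n,t)` is its greatest element. -/
def coolingCodeSizes (n t : ℕ) : Set ℕ :=
  {M | ∃ C : Fin M → Set (Fin n → ZMod 2), IsCoolingCode (ZMod 2) n t M C}

lemma card_zeroOn (n : ℕ) (S : Finset (Fin n)) :
    Fintype.card {x : Fin n → ZMod 2 // ∀ j ∈ S, x j = 0} = 2 ^ (n - S.card) := by
  have e : {x : Fin n → ZMod 2 // ∀ j ∈ S, x j = 0} ≃ ({j : Fin n // j ∉ S} → ZMod 2) :=
    { toFun := fun x j => x.1 j.1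
      invFun := fun g => ⟨fun j => if h : j ∈ S then 0 else g ⟨j, h⟩, by
        intro j hj; simp [hj]⟩
      left_inv := by
        intro x; ext j
        by_cases h : j ∈ S
        · simp [h, x.2 j h]
        · simp [h]
      right_inv := by
        intro g; funext j
        simp [j.2] }
  rw [Fintype.card_congr e, Fintype.card_fun]
  have h1 : Fintype.card {j : Fin n // j ∉ S} = n - S.card := by
    rw [Fintype.card_subtype_compl]
    simp [Fintype.card_coe]
  rw [h1, ZMod.card]

lemma cooling_ub {n t M : ℕ} {C : Fin M → Set (Fin n → ZMod 2)}
    (h : IsCoolingCode (ZMod 2) n t M C) (S : Finset (Fin n)) (hS : S.card = t) :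
    M ≤ 2 ^ (n - t) := by
  obtain ⟨hdis, hcov⟩ := h
  choose x hxC hx0 using hcov S hS
  have hinj : Function.Injective (fun i => (⟨x i, hx0 i⟩ :
      {y : Fin n → ZMod 2 // ∀ j ∈ S, y j = 0})) := by
    intro i j hij
    simp only [Subtype.mk.injEq] at hij
    by_contra hne
    exact Set.disjoint_left.mp (hdis i j hne) (hxC i) (hij ▸ hxC j)
  have := Fintype.card_le_of_injective _ hinj
  rw [Fintype.card_fin, card_zeroOn, hS] at this
  exact this

theorem stmt_7 (n : ℕ) (hn : 2 ≤ n) :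
    IsGreatest (coolingCodeSizes n 1) (2 ^ (n - 1)) ∧
    IsGreatest (coolingCodeSizes n (n - 1)) 2 := by
  have hz2 : ∀ a : ZMod 2, a = 0 ∨ a = 1 := by decide
  have h11 : (1 : ZMod 2) + 1 = 0 := by decide
  set z : Fin n := ⟨0, by omega⟩ with hzdef
  have hSz : ({z} : Finset (Fin n)).card = 1 := Finset.card_singleton z
  constructor
  · constructor
    · -- membership for t = 1
      have hc : Fintype.card {x : Fin n → ZMod 2 // ∀ j ∈ ({z} : Finset (Fin n)), x j = 0}
          = 2 ^ (n - 1) := by rw [card_zeroOn, hSz]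
      let e := Fintype.equivFinOfCardEq hc
      refine ⟨fun i => {(e.symm i).1, (e.symm i).1 + 1}, ?_, ?_⟩
      · intro i j hij
        have hiz : (e.symm i).1 z = 0 := (e.symm i).2 z (Finset.mem_singleton_self z)
        have hjz : (e.symm j).1 z = 0 := (e.symm j).2 z (Finset.mem_singleton_self z)
        rw [Set.disjoint_left]
        rintro a (rfl | rfl) (hj | hj)
        · exact hij (e.symm.injective (Subtype.ext hj))
        · have := congrFun hj z
          rw [hiz, Pi.add_apply, hjz, Pi.one_apply, zero_add] at this
          exact one_ne_zero this.symm
        · have := congrFun hj z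
          rw [Pi.add_apply, hiz, Pi.one_apply, zero_add, hjz] at this
          exact one_ne_zero this
        · have : (e.symm i).1 = (e.symm j).1 := add_right_cancel hj
          exact hij (e.symm.injective (Subtype.ext this))
      · intro S hS i
        obtain ⟨j, rfl⟩ := Finset.card_eq_one.mp hS
        rcases hz2 ((e.symm i).1 j) with h0 | h1
        · exact ⟨(e.symm i).1, Or.inl rfl, by simpa using h0⟩
        · refine ⟨(e.symm i).1 + 1, Or.inr rfl, ?_⟩
          intro k hk
          rw [Finset.mem_singleton] at hk
          subst hk
          rw [Pi.add_apply, h1, Pi.one_apply, h11]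
    · -- upper bound for t = 1
      rintro M ⟨C, hC⟩
      exact cooling_ub hC {z} hSz
  · have hSe : (Finset.univ.erase z).card = n - 1 := by
      rw [Finset.card_erase_of_mem (Finset.mem_univ z), Finset.card_univ, Fintype.card_fin]
    constructor
    · -- membership for t = n - 1
      refine ⟨fun i => if i = 0 then {0} else {x | x ≠ 0}, ?_, ?_⟩
      · intro i j hij
        fin_cases i <;> fin_cases j <;> simp_all
      · intro S hS i
        have hjex : ∃ j : Fin n, j ∉ S := by
          by_contra h
          push_neg at h
          have : S = Finset.univ := Finset.eq_univ_iff_forall.mpr h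
          rw [this, Finset.card_univ, Fintype.card_fin] at hS
          omega
        obtain ⟨j, hj⟩ := hjex
        fin_cases i
        · exact ⟨0, by simp, by simp⟩
        · refine ⟨fun k => if k = j then 1 else 0, ?_, ?_⟩
          · simp only [if_neg, Set.mem_setOf_eq]
            intro h
            have := congrFun h j
            simp at this
          · intro k hk
            have : k ≠ j := fun h => hj (h ▸ hk)
            simp [this]
    · -- upper bound for t = n - 1
      rintro M ⟨C, hC⟩
      have := cooling_ub hC (Finset.univ.erase z) hSe
      have hnn : n - (n - 1) = 1 := by omega
      rw [hnn, pow_one] at this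
      exact this
end

section
/- Let n and t be integers with 2 ≤ t ≤ n − 2. Then C(n,t) ≥ n − t + 1, i.e. there exists an (n,t)-cooling code of size n − t + 1. -/
theorem stmt_8 (n t : ℕ) (ht : 2 ≤ t) (htn : t ≤ n - 2) :
    ∃ C : Fin (n - t + 1) → Set (Fin n → ZMod 2),
      IsCoolingCode (ZMod 2) n t (n - t + 1) C := by
  refine ⟨fun i => {x | (Finset.univ.filter (fun j => x j ≠ 0)).card = i.val}, ?_, ?_⟩
  · intro i j hij
    rw [Set.disjoint_left]
    intro x hx hx'
    exact hij (Fin.ext (hx ▸ hx'))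
  · intro S hS i
    have htn' : t ≤ n := le_trans htn (Nat.sub_le n 2)
    have hc : (Sᶜ : Finset (Fin n)).card = n - t := by
      rw [Finset.card_compl, hS, Fintype.card_fin]
    have hi : i.val ≤ (Sᶜ : Finset (Fin n)).card := by
      rw [hc]; exact Nat.lt_succ_iff.mp i.isLt
    obtain ⟨T, hTsub, hTcard⟩ := Finset.exists_subset_card_eq hi
    refine ⟨fun j => if j ∈ T then 1 else 0, ?_, ?_⟩
    · have : (Finset.univ.filter (fun j => (if j ∈ T then (1 : ZMod 2) else 0) ≠ 0)) = T := by
        ext j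
        simp only [Finset.mem_filter, Finset.mem_univ, true_and]
        by_cases h : j ∈ T <;> simp [h]
      simp only [Set.mem_setOf_eq, this, hTcard]
    · intro j hj
      have : j ∉ T := fun h => (Finset.mem_compl.mp (hTsub h)) hj
      simp [this]
end

section
/- For every integer n ≥ 4, C(n, n−2) = 3, i.e. the maximum size of an (n, n−2)-cooling code is exactly 3. -/
/-- Vector supported on `{a, b}` with values `c`, `d`. -/
def cvec {n : ℕ} (a b : Fin n) (c d : ZMod 2) : Fin n → ZMod 2 :=
  fun j => if j = a then c else if j = b then d else 0

lemma cvec_supp {n : ℕ} {a b : Fin n} (hab : a ≠ b) {x : Fin n → ZMod 2}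
    (hx : ∀ j, j ≠ a → j ≠ b → x j = 0) : x = cvec a b (x a) (x b) := by
  funext j
  unfold cvec
  by_cases h1 : j = a
  · simp [h1]
  · by_cases h2 : j = b
    · simp [h1, h2, Ne.symm hab]
    · simp [h1, h2, hx j h1 h2]

lemma cvec_zero {n : ℕ} (a b : Fin n) : cvec a b 0 0 = 0 := by
  funext j; unfold cvec; split <;> simp

lemma cvec_e {n : ℕ} (a b : Fin n) :
    cvec a b 1 0 = (fun j => if j = a then (1 : ZMod 2) else 0) := by
  funext j
  unfold cvec
  by_cases h1 : j = a
  · simp [h1]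
  · by_cases h2 : j = b <;> simp [h1, h2]

lemma cvec_e' {n : ℕ} {a b : Fin n} (hab : a ≠ b) :
    cvec a b 0 1 = (fun j => if j = b then (1 : ZMod 2) else 0) := by
  funext j
  unfold cvec
  by_cases h1 : j = a
  · subst h1; simp [hab]
  · by_cases h2 : j = b <;> simp [h1, h2, Ne.symm hab]

lemma four_impossible (n : ℕ) (hn : 4 ≤ n) (C : Fin 4 → Set (Fin n → ZMod 2))
    (hdisj : ∀ i j : Fin 4, i ≠ j → Disjoint (C i) (C j))
    (hcov : ∀ a b : Fin n, a ≠ b → ∀ i : Fin 4,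
      ∃ x ∈ C i, ∀ j, j ≠ a → j ≠ b → x j = 0) : False := by
  have uniq : ∀ (v : Fin n → ZMod 2) (i j : Fin 4), v ∈ C i → v ∈ C j → i = j := by
    intro v i j hi hj
    by_contra hne
    exact Set.disjoint_left.mp (hdisj i j hne) hi hj
  choose f hf hsupp using hcov
  have hform : ∀ a b (h : a ≠ b) i,
      f a b h i = cvec a b (f a b h i a) (f a b h i b) :=
    fun a b h i => cvec_supp h (hsupp a b h i)
  -- the key lemma: if `cvec a b c d ∈ C i` then the chosen vector of `C i` is it.
  have L : ∀ a b (h : a ≠ b) (c d : ZMod 2) (i : Fin 4),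
      cvec a b c d ∈ C i → f a b h i a = c ∧ f a b h i b = d := by
    intro a b h c d i hi
    set φ : Fin 4 → ZMod 2 × ZMod 2 := fun i => (f a b h i a, f a b h i b) with hφ
    have hinj : Function.Injective φ := by
      intro i₁ i₂ h12
      apply uniq (f a b h i₁) i₁ i₂ (hf a b h i₁)
      have heq : f a b h i₁ = f a b h i₂ := by
        rw [hform a b h i₁, hform a b h i₂]
        have e1 : f a b h i₁ a = f a b h i₂ a := congrArg Prod.fst h12
        have e2 : f a b h i₁ b = f a b h i₂ b := congrArg Prod.snd h12
        rw [e1, e2]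
      rw [heq]; exact hf a b h i₂
    have hbij : Function.Bijective φ := by
      rw [Fintype.bijective_iff_injective_and_card]
      exact ⟨hinj, by simp⟩
    obtain ⟨i₁, hi₁⟩ := hbij.2 (c, d)
    have hc : f a b h i₁ a = c := congrArg Prod.fst hi₁
    have hd : f a b h i₁ b = d := congrArg Prod.snd hi₁
    have hv : f a b h i₁ = cvec a b c d := by
      rw [hform a b h i₁, hc, hd]
    have : i₁ = i := uniq (cvec a b c d) i₁ i (hv ▸ hf a b h i₁) hi
    subst this
    exact ⟨hc, hd⟩
  -- four distinct coordinates
  set κ : Fin 4 → Fin n := Fin.castLE hn with hκdef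
  have hκ : ∀ k l : Fin 4, k ≠ l → κ k ≠ κ l := by
    intro k l h he
    exact h (Fin.castLE_injective hn he)
  have hnk : ∀ k : Fin 4, k ≠ k + 1 := by decide
  -- the codeset containing 0
  have h01 : κ 0 ≠ κ 1 := hκ 0 1 (by decide)
  have hsurj : ∀ a b (h : a ≠ b) (c d : ZMod 2), ∃ i : Fin 4, cvec a b c d ∈ C i := by
    intro a b h c d
    set φ : Fin 4 → ZMod 2 × ZMod 2 := fun i => (f a b h i a, f a b h i b) with hφ
    have hinj : Function.Injective φ := by
      intro i₁ i₂ h12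
      apply uniq (f a b h i₁) i₁ i₂ (hf a b h i₁)
      have heq : f a b h i₁ = f a b h i₂ := by
        rw [hform a b h i₁, hform a b h i₂]
        have e1 : f a b h i₁ a = f a b h i₂ a := congrArg Prod.fst h12
        have e2 : f a b h i₁ b = f a b h i₂ b := congrArg Prod.snd h12
        rw [e1, e2]
      rw [heq]; exact hf a b h i₂
    have hbij : Function.Bijective φ := by
      rw [Fintype.bijective_iff_injective_and_card]
      exact ⟨hinj, by simp⟩
    obtain ⟨i₁, hi₁⟩ := hbij.2 (c, d)
    refine ⟨i₁, ?_⟩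
    have hc : f a b h i₁ a = c := congrArg Prod.fst hi₁
    have hd : f a b h i₁ b = d := congrArg Prod.snd hi₁
    have hv : f a b h i₁ = cvec a b c d := by
      rw [hform a b h i₁, hc, hd]
    exact hv ▸ hf a b h i₁
  obtain ⟨istar, histar⟩ := hsurj (κ 0) (κ 1) h01 0 0
  rw [cvec_zero] at histar
  -- unit vectors
  have exE : ∀ k : Fin 4, ∃ i : Fin 4,
      (fun j => if j = κ k then (1 : ZMod 2) else 0) ∈ C i := by
    intro k
    obtain ⟨i, hi⟩ := hsurj (κ k) (κ (k + 1)) (hκ k (k + 1) (hnk k)) 1 0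
    rw [cvec_e] at hi
    exact ⟨i, hi⟩
  choose g hg using exE
  -- g is injective
  have ginj : Function.Injective g := by
    intro k l hkl
    by_contra hne
    have hab : κ k ≠ κ l := hκ k l hne
    have h1 : cvec (κ k) (κ l) 1 0 ∈ C (g k) := by rw [cvec_e]; exact hg k
    have h2 : cvec (κ k) (κ l) 0 1 ∈ C (g k) := by
      rw [cvec_e' hab]; rw [hkl]; exact hg l
    have e1 := (L (κ k) (κ l) hab 1 0 (g k) h1).1
    have e2 := (L (κ k) (κ l) hab 0 1 (g k) h2).1
    exact one_ne_zero (e1.symm.trans e2)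
  -- g avoids istar
  have gne : ∀ k : Fin 4, g k ≠ istar := by
    intro k hk
    have hab : κ k ≠ κ (k + 1) := hκ k (k + 1) (hnk k)
    have h1 : cvec (κ k) (κ (k + 1)) 1 0 ∈ C (g k) := by rw [cvec_e]; exact hg k
    have h2 : cvec (κ k) (κ (k + 1)) 0 0 ∈ C (g k) := by
      rw [cvec_zero]; rw [hk]; exact histar
    have e1 := (L (κ k) (κ (k + 1)) hab 1 0 (g k) h1).1
    have e2 := (L (κ k) (κ (k + 1)) hab 0 0 (g k) h2).1
    exact one_ne_zero (e1.symm.trans e2)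
  obtain ⟨k, hk⟩ := (Finite.injective_iff_surjective.mp ginj) istar
  exact gne k hk

theorem stmt_9 (n : ℕ) (hn : 4 ≤ n) :
    IsGreatest (coolingCodeSizes n (n - 2)) 3 := by
  constructor
  · -- 3 is achievable: codesets of weight 0, 1, 2
    refine ⟨fun i => {x | (Finset.univ.filter fun j => x j ≠ 0).card = i.val}, ?_, ?_⟩
    · intro i j hij
      rw [Set.disjoint_left]
      intro x hxi hxj
      exact hij (Fin.ext (hxi.symm.trans hxj))
    · intro S hS i
      have hT : (Finset.univ \ S).card = 2 := by
        rw [Finset.card_sdiff_of_subset (Finset.subset_univ S), hS, Finset.card_univ, Fintype.card_fin]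
        omega
      obtain ⟨a, b, hab, hTab⟩ := Finset.card_eq_two.mp hT
      have haS : a ∉ S := by
        have : a ∈ Finset.univ \ S := by rw [hTab]; simp
        simpa using (Finset.mem_sdiff.mp this).2
      have hbS : b ∉ S := by
        have : b ∈ Finset.univ \ S := by rw [hTab]; simp
        simpa using (Finset.mem_sdiff.mp this).2
      fin_cases i
      · refine ⟨0, ?_, fun j _ => rfl⟩
        simp
      · refine ⟨fun j => if j = a then (1 : ZMod 2) else 0, ?_, ?_⟩
        · show (Finset.univ.filter fun j => (if j = a then (1 : ZMod 2) else 0) ≠ 0).card = 1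
          have : (Finset.univ.filter fun j => (if j = a then (1 : ZMod 2) else 0) ≠ 0) = {a} := by
            ext j
            by_cases h : j = a <;> simp [h]
          rw [this, Finset.card_singleton]
        · intro j hj
          have : j ≠ a := fun h => haS (h ▸ hj)
          simp [this]
      · refine ⟨fun j => if j = a ∨ j = b then (1 : ZMod 2) else 0, ?_, ?_⟩
        · show (Finset.univ.filter fun j =>
            (if j = a ∨ j = b then (1 : ZMod 2) else 0) ≠ 0).card = 2
          have : (Finset.univ.filter fun j =>
              (if j = a ∨ j = b then (1 : ZMod 2) else 0) ≠ 0) = {a, b} := by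
            ext j
            by_cases h1 : j = a <;> by_cases h2 : j = b <;> simp [h1, h2]
          rw [this, Finset.card_pair hab]
        · intro j hj
          have h1 : j ≠ a := fun h => haS (h ▸ hj)
          have h2 : j ≠ b := fun h => hbS (h ▸ hj)
          simp [h1, h2]
  · -- upper bound
    rintro M ⟨C, hdisj, hcov⟩
    by_contra hM
    push_neg at hM
    have h4M : 4 ≤ M := hM
    apply four_impossible n hn (fun i => C (Fin.castLE h4M i))
    · intro i j hij
      exact hdisj _ _ (fun h => hij (Fin.castLE_injective h4M h))
    · intro a b hab i
      have hS : (Finset.univ \ {a, b} : Finset (Fin n)).card = n - 2 := by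
        rw [Finset.card_sdiff_of_subset (Finset.subset_univ _), Finset.card_pair hab,
          Finset.card_univ, Fintype.card_fin]
      obtain ⟨x, hx, hxs⟩ := hcov (Finset.univ \ {a, b}) hS (Fin.castLE h4M i)
      refine ⟨x, hx, fun j h1 h2 => hxs j ?_⟩
      simp [h1, h2]
end

section
/- Let n and t be positive integers with t < n, and let V_1, V_2, …, V_M be a partial (t+1)-spread of F_2^n, i.e. a collection of M distinct (t+1)-dimensional linear subspaces of F_2^n any two of which intersect only in the zero vector. Define V*_i = V_i \ {0} for each i. Then {V*_1, V*_2, …, V*_M} is an (n,t)-cooling code of size M. -/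
theorem stmt_10 (n t M : ℕ) (ht : 0 < t) (htn : t < n)
    (V : Fin M → Submodule (ZMod 2) (Fin n → ZMod 2))
    (hdim : ∀ i, Module.finrank (ZMod 2) (V i) = t + 1)
    (hspread : ∀ i j : Fin M, i ≠ j → V i ⊓ V j = ⊥) :
    IsCoolingCode (ZMod 2) n t M
      (fun i => (V i : Set (Fin n → ZMod 2)) \ {0}) := by
  constructor
  · intro i j hij
    rw [Set.disjoint_left]
    rintro x ⟨hxi, hx0⟩ ⟨hxj, _⟩
    apply hx0
    have : x ∈ V i ⊓ V j := ⟨hxi, hxj⟩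
    rw [hspread i j hij] at this
    simpa using this
  · intro S hS i
    -- consider the restriction map V i → (S → ZMod 2)
    let f : (V i) →ₗ[ZMod 2] (S → ZMod 2) :=
      { toFun := fun v s => (v : Fin n → ZMod 2) s
        map_add' := fun a b => rfl
        map_smul' := fun c a => rfl }
    have hcod : Module.finrank (ZMod 2) (S → ZMod 2) = t := by
      simp [Module.finrank_pi, hS]
    have hlt : Module.finrank (ZMod 2) (S → ZMod 2)
        < Module.finrank (ZMod 2) (V i) := by
      rw [hcod, hdim i]; omega
    have hker : LinearMap.ker f ≠ ⊥ := by
      intro h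
      have hinj : Function.Injective f := LinearMap.ker_eq_bot.mp h
      have := LinearMap.finrank_le_finrank_of_injective hinj
      omega
    obtain ⟨v, hv, hv0⟩ := Submodule.exists_mem_ne_zero_of_ne_bot hker
    refine ⟨(v : Fin n → ZMod 2), ⟨v.2, ?_⟩, ?_⟩
    · simp only [Set.mem_singleton_iff]
      intro h
      exact hv0 (Subtype.ext h)
    · intro j hj
      have : f v = 0 := hv
      exact congrFun this ⟨j, hj⟩
end

section
/- Let n and t be positive integers with 2(t+1) ≤ n. Then there exists an (n,t)-cooling code of size at least 2^{n−t−1}; in particular C(n,t) ≥ 2^{n−t−1}. -/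
open Module

/-- Extension by zero as a linear map. -/
noncomputable def extZero (F : Type*) [Semiring F] (k m : ℕ) :
    (Fin k → F) →ₗ[F] (Fin m → F) where
  toFun z := fun i => if h : (i : ℕ) < k then z ⟨i, h⟩ else 0
  map_add' x y := by funext i; by_cases h : (i : ℕ) < k <;> simp [h]
  map_smul' c x := by funext i; by_cases h : (i : ℕ) < k <;> simp [h]

theorem extZero_injective (F : Type*) [Semiring F] {k m : ℕ} (hkm : k ≤ m) :
    Function.Injective (extZero F k m) := by
  intro a b hab
  funext j
  have := congrFun hab ⟨j, lt_of_lt_of_le j.2 hkm⟩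
  simpa [extZero] using this

theorem stmt_11 (n t : ℕ) (ht : 0 < t) (hn : 2 * (t + 1) ≤ n) :
    ∃ M : ℕ, 2 ^ (n - t - 1) ≤ M ∧
      ∃ C : Fin M → Set (Fin n → ZMod 2), IsCoolingCode (ZMod 2) n t M C := by
  set m := n - t - 1 with hm_def
  have hm : t + 1 ≤ m := by omega
  have hm0 : m ≠ 0 := by omega
  have hnm : n = m + (t + 1) := by omega
  set K := GaloisField 2 m with hK
  haveI : Fintype K := Fintype.ofFinite K
  have hcard : Fintype.card K = 2 ^ m := by
    rw [← Nat.card_eq_fintype_card]; exact GaloisField.card 2 m hm0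
  refine ⟨2 ^ m, le_refl _, ?_⟩
  -- index equivalence
  let ι : Fin (2 ^ m) → K := (Fintype.equivFinOfCardEq hcard).symm
  have hι : Function.Injective ι := (Fintype.equivFinOfCardEq hcard).symm.injective
  -- basis and linear maps
  have hfr : finrank (ZMod 2) K = m := GaloisField.finrank 2 hm0
  let b : Basis (Fin m) (ZMod 2) K := Module.finBasisOfFinrankEq (ZMod 2) K hfr
  let e : (Fin m → ZMod 2) ≃ₗ[ZMod 2] K := b.equivFun.symm
  let ψ : (Fin (t + 1) → ZMod 2) →ₗ[ZMod 2] K :=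
    e.toLinearMap ∘ₗ extZero (ZMod 2) (t + 1) m
  have hψ : Function.Injective ψ :=
    e.injective.comp (extZero_injective (ZMod 2) hm)
  let P : (Fin n → ZMod 2) →ₗ[ZMod 2] (Fin m → ZMod 2) :=
    LinearMap.funLeft (ZMod 2) (ZMod 2) (fun i : Fin m => Fin.castLE (by omega) i)
  let Q : (Fin n → ZMod 2) →ₗ[ZMod 2] (Fin (t + 1) → ZMod 2) :=
    LinearMap.funLeft (ZMod 2) (ZMod 2) (fun j : Fin (t + 1) => (⟨m + j, by omega⟩ : Fin n))
  let T : K → ((Fin n → ZMod 2) →ₗ[ZMod 2] K) :=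
    fun a => e.toLinearMap ∘ₗ P + a • (ψ ∘ₗ Q)
  have hT : ∀ a x, T a x = e (P x) + a * ψ (Q x) := by
    intro a x; simp [T, smul_eq_mul]
  -- if P x = 0 and Q x = 0 then x = 0
  have hPQ : ∀ x : Fin n → ZMod 2, P x = 0 → Q x = 0 → x = 0 := by
    intro x hP hQ
    funext i
    by_cases h : (i : ℕ) < m
    · have := congrFun hP ⟨i, h⟩
      simpa [P, LinearMap.funLeft_apply, Fin.castLE] using this
    · have hi : (i : ℕ) - m < t + 1 := by omega
      have := congrFun hQ ⟨(i : ℕ) - m, hi⟩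
      have hidx : (⟨m + ((i : ℕ) - m), by omega⟩ : Fin n) = i := by
        apply Fin.ext; simp; omega
      rw [LinearMap.funLeft_apply] at this
      rw [hidx] at this
      exact this
  classical
  refine ⟨fun i => {x | x ≠ 0 ∧ T (ι i) x = 0}, ?_, ?_⟩
  · -- disjointness
    intro i j hij
    rw [Set.disjoint_left]
    rintro x ⟨hx0, hxi⟩ ⟨-, hxj⟩
    apply hx0
    have ha : ι i ≠ ι j := fun h => hij (hι h)
    rw [hT] at hxi hxj
    have hsub : (ι i - ι j) * ψ (Q x) = 0 := by
      linear_combination hxi - hxj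
    have hψQ : ψ (Q x) = 0 := by
      rcases mul_eq_zero.mp hsub with h | h
      · exact absurd (sub_eq_zero.mp h) ha
      · exact h
    have hQ0 : Q x = 0 := by
      apply hψ; simpa using hψQ
    have heP : e (P x) = 0 := by
      rw [hψQ, mul_zero, add_zero] at hxi; exact hxi
    have hP0 : P x = 0 := by
      apply e.injective; simpa using heP
    exact hPQ x hP0 hQ0
  · -- transversality
    intro S hS i
    set a := ι i
    let A : Submodule (ZMod 2) (Fin n → ZMod 2) := LinearMap.ker (T a)
    let R : (Fin n → ZMod 2) →ₗ[ZMod 2] ({j // j ∈ S} → ZMod 2) :=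
      LinearMap.funLeft (ZMod 2) (ZMod 2) (Subtype.val : {j // j ∈ S} → Fin n)
    let B : Submodule (ZMod 2) (Fin n → ZMod 2) := LinearMap.ker R
    have hfrn : finrank (ZMod 2) (Fin n → ZMod 2) = n := by
      rw [Module.finrank_fintype_fun_eq_card, Fintype.card_fin]
    have hA : n - m ≤ finrank (ZMod 2) A := by
      have h1 := LinearMap.finrank_range_add_finrank_ker (T a)
      have h2 : finrank (ZMod 2) (LinearMap.range (T a)) ≤ m :=
        le_trans (Submodule.finrank_le _) (le_of_eq hfr)
      rw [hfrn] at h1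
      show n - m ≤ finrank (ZMod 2) (LinearMap.ker (T a))
      omega
    have hB : n - t ≤ finrank (ZMod 2) B := by
      have h1 := LinearMap.finrank_range_add_finrank_ker R
      have h2 : finrank (ZMod 2) (LinearMap.range R) ≤ t := by
        calc finrank (ZMod 2) (LinearMap.range R)
            ≤ finrank (ZMod 2) ({j // j ∈ S} → ZMod 2) := Submodule.finrank_le _
          _ = t := by
              rw [Module.finrank_fintype_fun_eq_card, Fintype.card_coe, hS]
      rw [hfrn] at h1
      show n - t ≤ finrank (ZMod 2) (LinearMap.ker R)
      omega
    have hsup : finrank (ZMod 2) ↥(A ⊔ B) ≤ n :=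
      le_trans (Submodule.finrank_le _) (le_of_eq hfrn)
    have hinf : 0 < finrank (ZMod 2) ↥(A ⊓ B) := by
      have key := Submodule.finrank_sup_add_finrank_inf_eq A B
      omega
    have hne : A ⊓ B ≠ ⊥ := by
      intro h
      rw [h, finrank_bot] at hinf
      exact lt_irrefl 0 hinf
    obtain ⟨x, hx, hx0⟩ := Submodule.exists_mem_ne_zero_of_ne_bot hne
    obtain ⟨hxA, hxB⟩ := Submodule.mem_inf.mp hx
    refine ⟨x, ⟨hx0, hxA⟩, ?_⟩
    intro j hj
    have := congrFun (LinearMap.mem_ker.mp hxB) ⟨j, hj⟩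
    simpa [R, LinearMap.funLeft_apply] using this
end

section
/- Let m > 1 be an integer, set n = 2^m, and let t be an integer with n/2 < t ≤ (n + m − 1)/2. Then there exists an (n,t)-cooling code of size M > 2^{n−t−1}. -/
open Module

section AffineCode

variable (F E : Type*) [Field F] [AddCommGroup E] [Module F E]

def affineEval : (Module.Dual F E × F) →ₗ[F] (E → F) where
  toFun p u := p.1 u + p.2
  map_add' _ _ := funext fun _ => add_add_add_comm _ _ _ _
  map_smul' c _ := funext fun _ => (mul_add c _ _).symm

-- For `E = 𝔽₂ᵐ` this is the first-order Reed–Muller code `RM(1, m)`.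
def affineCode : Submodule F (E → F) := LinearMap.range (affineEval F E)

variable {F E}

theorem affineEval_apply (l : Module.Dual F E) (c : F) (u : E) :
    affineEval F E (l, c) u = l u + c := rfl

theorem affineEval_injective : Function.Injective (affineEval F E) := by
  rw [← LinearMap.ker_eq_bot, LinearMap.ker_eq_bot']
  rintro ⟨l, c⟩ h
  have hc : c = 0 := by simpa [affineEval_apply] using congrFun h 0
  have hl : l = 0 := LinearMap.ext fun u => by simpa [affineEval_apply, hc] using congrFun h u
  rw [hl, hc, Prod.mk_zero_zero]

theorem finrank_affineCode [FiniteDimensional F E] :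
    finrank F (affineCode F E) = finrank F E + 1 := by
  rw [affineCode, LinearMap.finrank_range_of_inj affineEval_injective, finrank_prod,
    Subspace.dual_finrank_eq, finrank_self]

end AffineCode

theorem card_le_two_mul_hammingNorm_of_mem_affineCode {E : Type*} [AddCommGroup E]
    [Module (ZMod 2) E] [Fintype E]
    {f : E → ZMod 2} (hf : f ∈ affineCode (ZMod 2) E) (hf0 : f ≠ 0) :
    Fintype.card E ≤ 2 * hammingNorm f := by
  obtain ⟨⟨l, c⟩, rfl⟩ := hf
  by_cases hl : l = 0
  · have hc : c ≠ 0 := by rintro rfl; exact hf0 (by rw [hl, Prod.mk_zero_zero, map_zero])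
    have : hammingNorm (affineEval (ZMod 2) E (l, c)) = Fintype.card E := by
      rw [hammingNorm, Finset.filter_true_of_mem fun u _ => by simpa [affineEval_apply, hl]]
      rfl
    omega
  · -- translation by a point where `l = 1` swaps the zeros and the non-zeros of `l + c`
    obtain ⟨u₀, hu₀⟩ : ∃ u₀, l u₀ ≠ 0 := by simpa [DFunLike.ne_iff] using hl
    have hu₀ : l u₀ = 1 := by revert hu₀; generalize l u₀ = z; revert z; decide
    have hswap : (Finset.univ.filter fun u => affineEval (ZMod 2) E (l, c) u ≠ 0).card =
        (Finset.univ.filter fun u => ¬ affineEval (ZMod 2) E (l, c) u ≠ 0).card := by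
      refine Finset.card_equiv (Equiv.addRight u₀) fun u => ?_
      rw [Finset.mem_filter, Finset.mem_filter]
      simp only [Finset.mem_univ, Equiv.coe_addRight, affineEval_apply, map_add, hu₀,
        add_right_comm _ (1 : ZMod 2), true_and]
      generalize l u + c = z
      revert z; decide
    have := Finset.card_filter_add_card_filter_not (s := Finset.univ)
      fun u => affineEval (ZMod 2) E (l, c) u ≠ 0
    rw [Finset.card_univ] at this
    rw [hammingNorm]
    omega

theorem hammingNorm_comp_equiv {ι κ β : Type*} [Fintype ι] [Fintype κ] [Zero β]
    [DecidableEq β] (σ : ι ≃ κ) (f : κ → β) : hammingNorm (f ∘ σ) = hammingNorm f :=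
  Finset.card_equiv σ fun i => by simp

theorem exists_submodule_finrank_eq_succ_card_le_two_mul_hammingNorm {ι : Type*} [Fintype ι]
    {m : ℕ} (hι : Fintype.card ι = 2 ^ m) :
    ∃ R : Submodule (ZMod 2) (ι → ZMod 2), finrank (ZMod 2) R = m + 1 ∧
      ∀ r ∈ R, r ≠ 0 → 2 ^ m ≤ 2 * hammingNorm r := by
  let σ : ι ≃ (Fin m → ZMod 2) := Fintype.equivOfCardEq (by simp [hι])
  let e := LinearEquiv.funCongrLeft (ZMod 2) (ZMod 2) σ
  refine ⟨(affineCode (ZMod 2) (Fin m → ZMod 2)).map e.toLinearMap, ?_, ?_⟩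
  · rw [LinearEquiv.finrank_map_eq, finrank_affineCode, finrank_fin_fun]
  · rintro _ ⟨f, hf, rfl⟩ hf0
    have := card_le_two_mul_hammingNorm_of_mem_affineCode hf
      (by rintro rfl; exact hf0 (map_zero e))
    rw [Fintype.card_fun, ZMod.card, Fintype.card_fin] at this
    exact this.trans_eq (congrArg _ (hammingNorm_comp_equiv σ f).symm)

section CoolingCode

variable {F ι : Type*} [Field F] [Fintype ι]

theorem Submodule.exists_ne_zero_forall_mem_eq_zero (W : Submodule F (ι → F)) (S : Finset ι)
    (hS : S.card < finrank F W) : ∃ w ∈ W, w ≠ 0 ∧ ∀ j ∈ S, w j = 0 := by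
  let restrict : W →ₗ[F] (S → F) := LinearMap.funLeft F F Subtype.val ∘ₗ W.subtype
  have hker : LinearMap.ker restrict ≠ ⊥ :=
    LinearMap.ker_ne_bot_of_finrank_lt (by simpa using hS)
  obtain ⟨w, hw, hw0⟩ := Submodule.exists_mem_ne_zero_of_ne_bot hker
  exact ⟨w, w.2, by simpa using hw0, fun j hj => congrFun hw ⟨j, hj⟩⟩

theorem hammingNorm_le_card_sub_card [DecidableEq F] [DecidableEq ι] {w : ι → F} {S : Finset ι}
    (hS : ∀ j ∈ S, w j = 0) :
    hammingNorm w ≤ Fintype.card ι - S.card := by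
  rw [← Finset.card_compl]
  exact Finset.card_le_card fun j hj => Finset.mem_compl.mpr fun hjS =>
    (Finset.mem_filter.mp hj).2 (hS j hjS)

theorem isCoolingCode_of_pairwise_inf_le [DecidableEq F] {n t M : ℕ}
    (R : Submodule F (Fin n → F)) (hR : ∀ r ∈ R, r ≠ 0 → n - t < hammingNorm r)
    (W : Fin M → Submodule F (Fin n → F))
    (hW : ∀ i, t < finrank F (W i)) (hWW : Pairwise fun i j => W i ⊓ W j ≤ R) :
    IsCoolingCode F n t M fun i => {w | w ∈ W i ∧ w ≠ 0 ∧ hammingNorm w ≤ n - t} := by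
  refine ⟨fun i j hij => Set.disjoint_left.mpr ?_, fun S hS i => ?_⟩
  · rintro w ⟨hwi, hw0, hwt⟩ ⟨hwj, -, -⟩
    exact (hR w (hWW hij ⟨hwi, hwj⟩) hw0).not_ge hwt
  · obtain ⟨w, hw, hw0, hwS⟩ := (W i).exists_ne_zero_forall_mem_eq_zero S (hS ▸ hW i)
    refine ⟨w, ⟨hw, hw0, ?_⟩, hwS⟩
    simpa [hS] using hammingNorm_le_card_sub_card hwS

end CoolingCode

theorem sup_inf_sup_le_of_disjoint {α : Type*} [Lattice α] [OrderBot α] [IsModularLattice α]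
    {r q a b : α} (hrq : Disjoint r q) (ha : a ≤ q) (hb : b ≤ q) (hab : Disjoint a b) :
    (r ⊔ a) ⊓ (r ⊔ b) ≤ r := by
  have hb' : (r ⊔ b) ⊓ q = b := by
    rw [sup_comm, sup_inf_assoc_of_le r hb, hrq.eq_bot, sup_bot_eq]
  have ha' : a ⊓ (r ⊔ b) = ⊥ := by
    rw [← inf_eq_left.mpr ha, inf_assoc, inf_comm q, hb', hab.eq_bot]
  rw [sup_inf_assoc_of_le a le_sup_left, ha', sup_bot_eq]

theorem exists_submodule_finrank_eq {K V : Type*} [Field K] [AddCommGroup V] [Module K V]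
    [FiniteDimensional K V] {k : ℕ} (hk : k ≤ finrank K V) :
    ∃ L : Submodule K V, finrank K L = k := by
  let b := Module.finBasis K V
  refine ⟨Submodule.span K (Set.range (b ∘ Fin.castLE hk)), ?_⟩
  rw [finrank_span_eq_card (b.linearIndependent.comp _ (Fin.castLE_injective hk)),
    Fintype.card_fin]

section Spread

variable {F K X : Type*} [Field F] [Field K] [Algebra F K] [AddCommGroup X] [Module F X]

-- The Desarguesian partial spread of `X × K`, cut down to `ι X` in the first factor.
def graphSpread (ι : X →ₗ[F] K) : Option K → Submodule F (X × K)
  | none => LinearMap.range (LinearMap.inr F X K ∘ₗ ι)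
  | some α => (α • ι).graph

theorem pairwise_disjoint_graphSpread {ι : X →ₗ[F] K} (hι : Function.Injective ι) :
    Pairwise fun o o' => Disjoint (graphSpread ι o) (graphSpread ι o') := by
  have disjoint_none (α : K) : Disjoint (graphSpread ι none) (graphSpread ι (some α)) := by
    rw [Submodule.disjoint_def]
    rintro _ ⟨x, rfl⟩ hx
    simpa [graphSpread, LinearMap.mem_graph_iff] using hx
  rintro (_ | α) (_ | β) hne
  · exact absurd rfl hne
  · exact disjoint_none β
  · exact (disjoint_none α).symm
  · rw [Submodule.disjoint_def]
    rintro ⟨x, y⟩ hα hβ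
    simp only [graphSpread, LinearMap.mem_graph_iff, LinearMap.smul_apply] at hα hβ
    have hx : ι x = 0 := by
      have : (α - β) • ι x = 0 := by rw [sub_smul, ← hα, ← hβ, sub_self]
      exact (smul_eq_zero.mp this).resolve_left (sub_ne_zero.mpr fun h => hne (congrArg some h))
    exact Prod.ext (hι (hx.trans (map_zero ι).symm)) (by simp [hα, hx])

theorem finrank_graphSpread [FiniteDimensional F X] {ι : X →ₗ[F] K} (hι : Function.Injective ι)
    (o : Option K) : finrank F (graphSpread ι o) = finrank F X := by
  cases o with
  | none => exact LinearMap.finrank_range_of_inj (LinearMap.inr_injective.comp hι)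
  | some α =>
    rw [graphSpread, LinearMap.graph_eq_range_prod]
    exact LinearMap.finrank_range_of_inj fun x y h => congrArg Prod.fst h

end Spread

theorem exists_pairwise_disjoint_finrank_eq (p : ℕ) [Fact p.Prime] {V : Type*} [AddCommGroup V]
    [Module (ZMod p) V] {a k : ℕ} (hV : finrank (ZMod p) V = k + a) (hka : k ≤ a) :
    ∃ U : Fin (p ^ a + 1) → Submodule (ZMod p) V, (∀ i, finrank (ZMod p) (U i) = k) ∧
      Pairwise fun i j => Disjoint (U i) (U j) := by
  rcases Nat.eq_zero_or_pos a with rfl | ha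
  · exact ⟨fun _ => ⊥, fun _ => by rw [finrank_bot]; omega, fun _ _ _ => disjoint_bot_left⟩
  have hK : finrank (ZMod p) (GaloisField p a) = a := GaloisField.finrank p ha.ne'
  obtain ⟨L, hL⟩ := exists_submodule_finrank_eq (hka.trans_eq hK.symm)
  have : FiniteDimensional (ZMod p) V := Module.finite_of_finrank_pos (by omega)
  let e : (L × GaloisField p a) ≃ₗ[ZMod p] V :=
    LinearEquiv.ofFinrankEq _ _ (by rw [finrank_prod, hL, hK, hV])
  let σ : Fin (p ^ a + 1) ≃ Option (GaloisField p a) := (finSuccEquiv _).trans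
    (Equiv.optionCongr (Finite.equivFinOfCardEq (GaloisField.card p a ha.ne')).symm)
  refine ⟨fun i => (graphSpread L.subtype (σ i)).map e.toLinearMap, fun i => ?_, fun i j hij => ?_⟩
  · rw [LinearEquiv.finrank_map_eq, finrank_graphSpread L.injective_subtype, hL]
  · exact Submodule.disjoint_map e.injective
      (pairwise_disjoint_graphSpread L.injective_subtype (σ.injective.ne hij))

theorem two_mul_le_two_pow (m : ℕ) : 2 * m ≤ 2 ^ m := by
  induction m with
  | zero => simp
  | succ k ih => rw [pow_succ]; have := Nat.one_le_two_pow (n := k); omega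

theorem stmt_13_general (m n t : ℕ) (hn : n = 2 ^ m)
    (ht1 : n < 2 * t) (ht2 : 2 * t ≤ n + m - 1) :
    ∃ M : ℕ, 2 ^ (n - t - 1) < M ∧
      ∃ C : Fin M → Set (Fin n → ZMod 2), IsCoolingCode (ZMod 2) n t M C := by
  have hm : 2 * m ≤ n := hn ▸ two_mul_le_two_pow m
  obtain ⟨R, hR, hRw⟩ := exists_submodule_finrank_eq_succ_card_le_two_mul_hammingNorm
    (ι := Fin n) (by rw [Fintype.card_fin, hn])
  obtain ⟨Q, hRQ⟩ := R.exists_isCompl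
  have hQ : finrank (ZMod 2) Q = (t - m) + (n - t - 1) := by
    have := Submodule.finrank_add_eq_of_isCompl hRQ
    rw [hR, finrank_fin_fun] at this
    omega
  obtain ⟨U, hU, hUU⟩ := exists_pairwise_disjoint_finrank_eq 2 hQ (by omega)
  have hUQ (i) : (U i).map Q.subtype ≤ Q := Submodule.map_subtype_le Q (U i)
  refine ⟨_, Nat.lt_succ_self _, _, isCoolingCode_of_pairwise_inf_le R ?_
    (fun i => R ⊔ (U i).map Q.subtype) (fun i => ?_) (fun i j hij => ?_)⟩
  · intro r hr hr0
    have := hRw r hr hr0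
    omega
  · have := Submodule.finrank_sup_add_finrank_inf_eq R ((U i).map Q.subtype)
    rw [(hRQ.disjoint.mono_right (hUQ i)).eq_bot, finrank_bot, hR,
      Submodule.finrank_map_subtype_eq, hU] at this
    omega
  · exact sup_inf_sup_le_of_disjoint hRQ.disjoint (hUQ i) (hUQ j)
      (Submodule.disjoint_map Q.injective_subtype (hUU hij))

theorem stmt_13 (m n t : ℕ) (hm : 1 < m) (hn : n = 2 ^ m)
    (ht1 : n < 2 * t) (ht2 : 2 * t ≤ n + m - 1) :
    ∃ M : ℕ, 2 ^ (n - t - 1) < M ∧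
      ∃ C : Fin M → Set (Fin n → ZMod 2), IsCoolingCode (ZMod 2) n t M C :=
  stmt_13_general m n t hn ht1 ht2
end

section
/- Let n, t, s, r be positive integers with t < n and r + t ≤ (n + s)/2. Suppose there exists an s-dimensional linear subspace K of F_2^n whose r-th generalized Hamming weight satisfies d_r(K) > n − t. Then there exists an (n,t)-cooling code of size M > 2^{n−t−r}. -/
set_option maxHeartbeats 1000000


open Module Submodule LinearMap

/-- In a finite-dimensional space, every submodule contains a submodule of any
smaller finrank. -/
private lemma exists_sub_finrank_eq {F V : Type*} [Field F] [AddCommGroup V] [Module F V]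
    [FiniteDimensional F V] (W : Submodule F V) {m : ℕ} (h : m ≤ finrank F W) :
    ∃ p : Submodule F V, p ≤ W ∧ finrank F p = m := by
  let b := Module.finBasis F W
  let v : Fin m → V := fun i => (b (Fin.castLE h i) : V)
  have hli : LinearIndependent F v :=
    (b.linearIndependent.map' W.subtype W.ker_subtype).comp (Fin.castLE h)
      (Fin.castLE_injective h)
  refine ⟨Submodule.span F (Set.range v), ?_, ?_⟩
  · rw [Submodule.span_le]
    rintro _ ⟨i, rfl⟩
    exact (b (Fin.castLE h i)).2
  · rw [finrank_span_eq_card hli, Fintype.card_fin]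

theorem stmt_14 (n t s r : ℕ) (ht : 0 < t) (htn : t < n)
    (hs : 0 < s) (hr : 0 < r) (hrt : 2 * (r + t) ≤ n + s)
    (K : Submodule (ZMod 2) (Fin n → ZMod 2))
    (hK : Module.finrank (ZMod 2) K = s)
    -- the r-th generalized Hamming weight of K is larger than n - t:
    -- every r-dimensional subcode of K has support of size greater than n - t
    (hghw : ∀ K' : Submodule (ZMod 2) (Fin n → ZMod 2), K' ≤ K →
      Module.finrank (ZMod 2) K' = r →
      n - t < {i : Fin n | ∃ x ∈ K', x i ≠ 0}.ncard) :
    ∃ M : ℕ, 2 ^ (n - t - r) < M ∧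
      ∃ C : Fin M → Set (Fin n → ZMod 2), IsCoolingCode (ZMod 2) n t M C := by
  classical
  -- the subspace of vectors vanishing on `S`
  let π : (S : Finset (Fin n)) → ((Fin n → (ZMod 2)) →ₗ[(ZMod 2)] ({j // j ∈ S} → (ZMod 2))) := fun S =>
    LinearMap.funLeft (ZMod 2) (ZMod 2) (Subtype.val : {j // j ∈ S} → Fin n)
  let Z : Finset (Fin n) → Submodule (ZMod 2) (Fin n → (ZMod 2)) := fun S => LinearMap.ker (π S)
  have hZmem : ∀ (S : Finset (Fin n)) (x : Fin n → (ZMod 2)), x ∈ Z S ↔ ∀ j ∈ S, x j = 0 := by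
    intro S x
    show π S x = 0 ↔ _
    constructor
    · intro h j hj
      exact congrFun h ⟨j, hj⟩
    · intro h
      funext j
      exact h j.1 j.2
  have hnrank : finrank (ZMod 2) (Fin n → (ZMod 2)) = n := by
    rw [Module.finrank_pi, Fintype.card_fin]
  -- the dimension of `Z S`
  have hZrank : ∀ S : Finset (Fin n), S.card = t → t + finrank (ZMod 2) (Z S) = n := by
    intro S hS
    have hsurj : Function.Surjective (π S) :=
      LinearMap.funLeft_surjective_of_injective (ZMod 2) (ZMod 2) _ Subtype.val_injective
    have h1 := LinearMap.finrank_range_add_finrank_ker (π S)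
    rw [LinearMap.range_eq_top.mpr hsurj, finrank_top, hnrank] at h1
    have h2 : finrank (ZMod 2) ({j // j ∈ S} → (ZMod 2)) = t := by
      rw [Module.finrank_pi]
      simpa [Fintype.card_coe] using hS
    rw [h2] at h1
    exact h1
  -- the intersection of `Z S` with `K` has dimension at most `r - 1`
  have hZK : ∀ S : Finset (Fin n), S.card = t →
      finrank (ZMod 2) ((Z S) ⊓ K : Submodule (ZMod 2) (Fin n → (ZMod 2))) + 1 ≤ r := by
    intro S hS
    by_contra hcon
    push_neg at hcon
    have hle : r ≤ finrank (ZMod 2) ((Z S) ⊓ K : Submodule (ZMod 2) (Fin n → (ZMod 2))) := by omega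
    obtain ⟨p, hple, hpr⟩ := exists_sub_finrank_eq ((Z S) ⊓ K) hle
    have hgt := hghw p (hple.trans inf_le_right) hpr
    have hsub : {i : Fin n | ∃ x ∈ p, x i ≠ 0} ⊆ (↑(Sᶜ) : Set (Fin n)) := by
      rintro i ⟨x, hxp, hxi⟩
      simp only [Finset.coe_compl, Set.mem_compl_iff, Finset.mem_coe]
      intro hiS
      exact hxi ((hZmem S x).mp (Submodule.mem_inf.mp (hple hxp)).1 i hiS)
    have hcard := Set.ncard_le_ncard hsub (Set.toFinite _)
    rw [Set.ncard_coe_finset, Finset.card_compl, hS, Fintype.card_fin] at hcard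
    exact absurd hgt (not_lt.mpr hcard)
  -- hence `s ≤ t + r - 1`
  have hsle : s + 1 ≤ t + r := by
    obtain ⟨S₀, -, hS₀⟩ := Finset.exists_subset_card_eq
      (show t ≤ (Finset.univ : Finset (Fin n)).card by
        rw [Finset.card_univ, Fintype.card_fin]; omega)
    have h1 := LinearMap.finrank_range_add_finrank_ker ((π S₀).comp K.subtype)
    rw [hK] at h1
    have hker : LinearMap.ker ((π S₀).comp K.subtype) = Submodule.comap K.subtype (Z S₀) := by
      rw [LinearMap.ker_comp]
    have hker2 : finrank (ZMod 2) (LinearMap.ker ((π S₀).comp K.subtype)) =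
        finrank (ZMod 2) (K ⊓ Z S₀ : Submodule (ZMod 2) (Fin n → (ZMod 2))) := by
      rw [hker, ← Submodule.map_comap_subtype, Submodule.finrank_map_subtype_eq]
    have hrange : finrank (ZMod 2) (LinearMap.range ((π S₀).comp K.subtype)) ≤ t := by
      have := Submodule.finrank_le (LinearMap.range ((π S₀).comp K.subtype))
      rw [Module.finrank_pi] at this
      simpa [Fintype.card_coe, hS₀] using this
    have hZK0 := hZK S₀ hS₀
    rw [inf_comm] at hZK0
    omega
  have hn1 : t + r + 1 ≤ n := by omega
  -- introduce `k` and `d`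
  obtain ⟨k, hk, hk1⟩ : ∃ k, n = t + r + k ∧ 1 ≤ k := ⟨n - t - r, by omega, by omega⟩
  obtain ⟨d, hd, hd1, hdk⟩ : ∃ d, t + r = s + d ∧ 1 ≤ d ∧ d ≤ k := ⟨t + r - s, by omega, by omega, by omega⟩
  have hsn : s ≤ n := by omega
  -- the Galois field with 2^k elements
  let L := GaloisField 2 k
  have hLrank : finrank (ZMod 2) L = k := GaloisField.finrank 2 (by omega)
  have hLcard : Nat.card L = 2 ^ k := GaloisField.card 2 k (by omega)
  let E : L ≃ₗ[(ZMod 2)] (Fin k → (ZMod 2)) :=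
    LinearEquiv.ofFinrankEq L (Fin k → (ZMod 2)) (by rw [hLrank, Module.finrank_pi, Fintype.card_fin])
  -- the target space
  let P := (Fin d → (ZMod 2)) × (Fin k → (ZMod 2))
  have hPrank : finrank (ZMod 2) P = n - s := by
    rw [Module.finrank_prod, Module.finrank_pi, Module.finrank_pi, Fintype.card_fin,
      Fintype.card_fin]
    omega
  -- a linear map with kernel exactly `K`
  obtain ⟨ψ, hψker⟩ : ∃ ψ : (Fin n → (ZMod 2)) →ₗ[(ZMod 2)] P, LinearMap.ker ψ = K := by
    have hq : finrank (ZMod 2) ((Fin n → (ZMod 2)) ⧸ K) = finrank (ZMod 2) P := by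
      have h1 := Submodule.finrank_quotient_add_finrank K
      rw [hK, hnrank] at h1
      rw [hPrank]
      omega
    refine ⟨(LinearEquiv.ofFinrankEq ((Fin n → (ZMod 2)) ⧸ K) P hq).toLinearMap.comp K.mkQ, ?_⟩
    rw [LinearMap.ker_comp, LinearEquiv.ker, Submodule.comap_bot, Submodule.ker_mkQ]
  -- an injective linear map `(ZMod 2)^d → (ZMod 2)^k`
  let clamp : Fin k → Fin d := fun j => ⟨min j.1 (d - 1), by omega⟩
  have hclamp : Function.Surjective clamp := by
    intro i
    refine ⟨⟨i.1, by omega⟩, ?_⟩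
    have := i.2
    simp only [clamp]
    exact Fin.ext (by simp; omega)
  let ι : (Fin d → (ZMod 2)) →ₗ[(ZMod 2)] (Fin k → (ZMod 2)) := LinearMap.funLeft (ZMod 2) (ZMod 2) clamp
  have hι : Function.Injective ι := LinearMap.funLeft_injective_of_surjective (ZMod 2) (ZMod 2) _ hclamp
  -- the family of "multiplication" maps
  let φ : L → ((Fin d → (ZMod 2)) →ₗ[(ZMod 2)] (Fin k → (ZMod 2))) := fun a =>
    (E.toLinearMap.comp ((LinearMap.mulLeft (ZMod 2) a).comp E.symm.toLinearMap)).comp ι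
  have hφ : ∀ (a b : L) (x : Fin d → (ZMod 2)), a ≠ b → φ a x = φ b x → x = 0 := by
    intro a b x hab h
    simp only [φ, LinearMap.comp_apply] at h
    have h2 : a * E.symm (ι x) = b * E.symm (ι x) := E.injective h
    have h3 : E.symm (ι x) = 0 := by
      by_contra h0
      exact hab (mul_right_cancel₀ h0 h2)
    have h4 : ι x = 0 := by
      have h5 := congrArg E h3
      simpa using h5
    exact hι (by rw [h4, map_zero])
  -- enumerate the elements of L
  let e : Fin (2 ^ k) → L := fun i => (Finite.equivFinOfCardEq hLcard).symm i
  have he : Function.Injective e := (Finite.equivFinOfCardEq hLcard).symm.injective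
  -- the spread of subspaces
  set M : ℕ := 2 ^ k + 1 with hM
  let W : Fin M → Submodule (ZMod 2) P := fun i =>
    if h : (i : ℕ) < 2 ^ k then
      LinearMap.range ((LinearMap.id : (Fin d → (ZMod 2)) →ₗ[(ZMod 2)] (Fin d → (ZMod 2))).prod (φ (e ⟨i.1, h⟩)))
    else LinearMap.range (LinearMap.inr (ZMod 2) (Fin d → (ZMod 2)) (Fin k → (ZMod 2)))
  -- membership in graphs
  have hmemg : ∀ (f : (Fin d → (ZMod 2)) →ₗ[(ZMod 2)] (Fin k → (ZMod 2))) (x : P),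
      x ∈ LinearMap.range ((LinearMap.id : (Fin d → (ZMod 2)) →ₗ[(ZMod 2)] (Fin d → (ZMod 2))).prod f) ↔
        x.2 = f x.1 := by
    intro f x
    constructor
    · rintro ⟨y, rfl⟩
      simp [LinearMap.prod_apply]
    · intro h
      exact ⟨x.1, Prod.ext_iff.mpr ⟨rfl, h.symm⟩⟩
  have hmemr : ∀ x : P, x ∈ LinearMap.range (LinearMap.inr (ZMod 2) (Fin d → (ZMod 2)) (Fin k → (ZMod 2))) ↔
      x.1 = 0 := by
    intro x
    constructor
    · rintro ⟨y, rfl⟩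
      simp
    · intro h
      exact ⟨x.2, Prod.ext_iff.mpr ⟨h.symm, rfl⟩⟩
  -- pairwise trivial intersection
  have hWdisj : ∀ i j : Fin M, i ≠ j → ∀ x : P, x ∈ W i → x ∈ W j → x = 0 := by
    have key : ∀ i j : Fin M, (i : ℕ) < 2 ^ k → ∀ x : P, x ∈ W i → x ∈ W j → x.1 = 0 → x = 0 := by
      intro i j hi x hxi _ h1
      simp only [W, dif_pos hi] at hxi
      have h2 := (hmemg _ x).mp hxi
      have h4 : x.2 = 0 := by rw [h2, h1, map_zero]
      rw [Prod.ext_iff]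
      exact ⟨by simp [h1], by simp [h4]⟩
    intro i j hij x hxi hxj
    by_cases hi : (i : ℕ) < 2 ^ k <;> by_cases hj : (j : ℕ) < 2 ^ k
    · simp only [W, dif_pos hi] at hxi
      simp only [W, dif_pos hj] at hxj
      have h2 := (hmemg _ x).mp hxi
      have h3 := (hmemg _ x).mp hxj
      have hne : e ⟨i.1, hi⟩ ≠ e ⟨j.1, hj⟩ := by
        intro hcon
        apply hij
        have := he hcon
        exact Fin.ext (by simpa using congrArg Fin.val this)
      have h1 : x.1 = 0 := hφ _ _ x.1 hne (by rw [← h2, h3])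
      have h4 : x.2 = 0 := by rw [h2, h1, map_zero]
      rw [Prod.ext_iff]
      exact ⟨by simp [h1], by simp [h4]⟩
    · have h1 : x.1 = 0 := by
        have hxj' := hxj
        simp only [W, dif_neg hj] at hxj'
        exact (hmemr x).mp hxj'
      exact key i j hi x hxi hxj h1
    · have h1 : x.1 = 0 := by
        have hxi' := hxi
        simp only [W, dif_neg hi] at hxi'
        exact (hmemr x).mp hxi'
      exact key j i hj x hxj hxi h1
    · exfalso
      apply hij
      have h1 : (i : ℕ) < 2 ^ k + 1 := i.isLt
      have h2 : (j : ℕ) < 2 ^ k + 1 := j.isLt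
      exact Fin.ext (by omega)
  -- each member of the spread has dimension at least d
  have hWrank : ∀ i : Fin M, d ≤ finrank (ZMod 2) (W i) := by
    intro i
    by_cases hi : (i : ℕ) < 2 ^ k
    · have hWi : W i = LinearMap.range
          ((LinearMap.id : (Fin d → (ZMod 2)) →ₗ[(ZMod 2)] (Fin d → (ZMod 2))).prod (φ (e ⟨i.1, hi⟩))) :=
        dif_pos hi
      have hinj : Function.Injective
          ((LinearMap.id : (Fin d → (ZMod 2)) →ₗ[(ZMod 2)] (Fin d → (ZMod 2))).prod (φ (e ⟨i.1, hi⟩))) := by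
        intro x y hxy
        simpa using congrArg Prod.fst hxy
      have hr1 := LinearMap.finrank_range_of_inj hinj
      rw [Module.finrank_pi, Fintype.card_fin] at hr1
      rw [hWi]
      exact le_of_eq hr1.symm
    · have hWi : W i = LinearMap.range (LinearMap.inr (ZMod 2) (Fin d → (ZMod 2)) (Fin k → (ZMod 2))) :=
        dif_neg hi
      have hinj : Function.Injective (LinearMap.inr (ZMod 2) (Fin d → (ZMod 2)) (Fin k → (ZMod 2))) := by
        intro x y hxy
        simpa using congrArg Prod.snd hxy
      have hr1 := LinearMap.finrank_range_of_inj hinj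
      rw [Module.finrank_pi, Fintype.card_fin] at hr1
      rw [hWi]
      exact le_trans hdk (le_of_eq hr1.symm)
  -- the image of `Z S` under `ψ` has dimension at least `k + 1`
  have hGS : ∀ S : Finset (Fin n), S.card = t →
      k + 1 ≤ finrank (ZMod 2) (Submodule.map ψ (Z S)) := by
    intro S hS
    have h1 := LinearMap.finrank_range_add_finrank_ker (ψ.comp (Z S).subtype)
    have hr1 : LinearMap.range (ψ.comp (Z S).subtype) = Submodule.map ψ (Z S) := by
      rw [LinearMap.range_comp, Submodule.range_subtype]
    have hk1 : finrank (ZMod 2) (LinearMap.ker (ψ.comp (Z S).subtype)) =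
        finrank (ZMod 2) ((Z S) ⊓ K : Submodule (ZMod 2) (Fin n → (ZMod 2))) := by
      rw [LinearMap.ker_comp, hψker, ← Submodule.map_comap_subtype,
        Submodule.finrank_map_subtype_eq]
    rw [hr1, hk1] at h1
    have h2 := hZrank S hS
    have h3 := hZK S hS
    omega
  -- the codesets
  refine ⟨M, ?_, ?_⟩
  · have hkk : n - t - r = k := by omega
    calc 2 ^ (n - t - r) = 2 ^ k := by rw [hkk]
      _ < 2 ^ k + 1 := Nat.lt_succ_self _
      _ = M := hM.symm
  refine ⟨fun i => ψ ⁻¹' ((W i : Set P) \ {0}), ?_, ?_⟩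
  · -- pairwise disjoint
    intro i j hij
    rw [Set.disjoint_left]
    rintro x ⟨hxi, hxi0⟩ ⟨hxj, _⟩
    exact hxi0 (hWdisj i j hij (ψ x) hxi hxj)
  · -- covering property
    intro S hS i
    have hsum := Submodule.finrank_sup_add_finrank_inf_eq (W i) (Submodule.map ψ (Z S))
    have hle : finrank (ZMod 2) ((W i) ⊔ Submodule.map ψ (Z S) : Submodule (ZMod 2) P) ≤ n - s :=
      le_trans (Submodule.finrank_le _) (le_of_eq hPrank)
    have h1 : 1 ≤ finrank (ZMod 2) ((W i) ⊓ Submodule.map ψ (Z S) : Submodule (ZMod 2) P) := by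
      have h2 := hWrank i
      have h3 := hGS S hS
      omega
    have hnb : ((W i) ⊓ Submodule.map ψ (Z S) : Submodule (ZMod 2) P) ≠ ⊥ := by
      intro h
      rw [h, finrank_bot] at h1
      omega
    obtain ⟨y, hy, hy0⟩ := (Submodule.ne_bot_iff _).mp hnb
    obtain ⟨hyW, hyG⟩ := Submodule.mem_inf.mp hy
    obtain ⟨x, hxZ, hxy⟩ := Submodule.mem_map.mp hyG
    refine ⟨x, ⟨?_, ?_⟩, fun j hj => (hZmem S x).mp hxZ j hj⟩
    · show ψ x ∈ (W i : Set P)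
      rw [hxy]
      exact hyW
    · show ψ x ∉ ({0} : Set P)
      rw [hxy]
      simpa using hy0
end

section
/- Let q be a prime power and let n, κ, t be positive integers with t < n. If there exists an [n, κ, t+1] linear code over F_q, then there exists an (n,t)_q-cooling code of size q^κ. -/
open Module Matrix

theorem IsCoolingCode.of_fibers {F Y : Type*} [Zero F] {n t M : ℕ} (e : Fin M ↪ Y)
    (f : (Fin n → F) → Y)
    (hf : ∀ S : Finset (Fin n), S.card = t → ∀ y, ∃ x, f x = y ∧ ∀ j ∈ S, x j = 0) :
    IsCoolingCode F n t M fun i => f ⁻¹' {e i} :=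
  ⟨fun _ _ hij => (Set.disjoint_singleton.mpr (e.injective.ne hij)).preimage f,
    fun S hS i => hf S hS (e i)⟩

theorem Submodule.map_eq_top_of_separating {K V W : Type*} [Field K] [AddCommGroup V]
    [Module K V] [AddCommGroup W] [Module K W] [FiniteDimensional K W]
    (B : V →ₗ[K] Dual K W) (P : Submodule K V) (h : ∀ w, (∀ v ∈ P, B v w = 0) → w = 0) :
    P.map B = ⊤ := by
  have hbot : (P.map B).dualCoannihilator = ⊥ :=
    (Submodule.eq_bot_iff _).mpr fun w hw =>
      h w fun v hv => (Submodule.mem_dualCoannihilator w).mp hw _ (Submodule.mem_map_of_mem hv)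
  rw [← Subspace.dualCoannihilator_dualAnnihilator_eq (W := P.map B), hbot,
    Submodule.dualAnnihilator_bot]

theorem hammingNorm_le_card_of_forall_notMem_eq_zero {ι : Type*} [Fintype ι] {β : ι → Type*}
    [∀ i, DecidableEq (β i)] [∀ i, Zero (β i)] {x : ∀ i, β i} {S : Finset ι}
    (hx : ∀ i ∉ S, x i = 0) : hammingNorm x ≤ S.card :=
  Finset.card_le_card fun i hi => by
    by_contra hiS
    exact (Finset.mem_filter.mp hi).2 (hx i hiS)

section MinimumWeight

variable {F : Type*} [Field F] [DecidableEq F] {n t : ℕ} {K : Submodule F (Fin n → F)}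
  {S : Finset (Fin n)}

theorem eq_zero_of_forall_notMem_eq_zero (hK : ∀ x ∈ K, x ≠ 0 → t + 1 ≤ hammingNorm x)
    (hS : S.card ≤ t) {w : Fin n → F} (hwK : w ∈ K) (hw : ∀ j ∉ S, w j = 0) : w = 0 := by
  by_contra hw0
  have := hK w hwK hw0
  have := hammingNorm_le_card_of_forall_notMem_eq_zero hw
  omega

theorem exists_dotProduct_eq_of_card_le (hK : ∀ x ∈ K, x ≠ 0 → t + 1 ≤ hammingNorm x)
    (hS : S.card ≤ t) (φ : Dual F K) :
    ∃ x : Fin n → F, (dotProductBilin F F).compl₂ K.subtype x = φ ∧ ∀ j ∈ S, x j = 0 := by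
  let P : Submodule F (Fin n → F) := Submodule.pi S fun _ => ⊥
  have hsep (w : K) (hw : ∀ x ∈ P, (dotProductBilin F F).compl₂ K.subtype x w = 0) : w = 0 := by
    refine Subtype.ext (eq_zero_of_forall_notMem_eq_zero hK hS w.2 fun j hj => ?_)
    have hjP : Pi.single j 1 ∈ P := fun i hi => by
      simp [show i ≠ j from fun h => hj (h ▸ hi)]
    simpa using hw _ hjP
  obtain ⟨x, hxP, hx⟩ := Submodule.eq_top_iff'.mp (Submodule.map_eq_top_of_separating _ P hsep) φ
  exact ⟨x, hx, hxP⟩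

end MinimumWeight

theorem stmt_15_general (q n κ t : ℕ)
    (F : Type) [Field F] [Fintype F] [DecidableEq F] (hF : Fintype.card F = q)
    (hcode : ∃ K : Submodule F (Fin n → F),
      Module.finrank F K = κ ∧ ∀ x ∈ K, x ≠ 0 → t + 1 ≤ hammingNorm x) :
    ∃ C : Fin (q ^ κ) → Set (Fin n → F), IsCoolingCode F n t (q ^ κ) C := by
  obtain ⟨K, hκ, hK⟩ := hcode
  have : Finite (Dual F K) := Module.finite_of_finite F
  have hcard : Nat.card (Dual F K) = q ^ κ := by
    rw [natCard_eq_pow_finrank (K := F), Subspace.dual_finrank_eq, hκ, Nat.card_eq_fintype_card,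
      hF]
  exact ⟨_, .of_fibers (Finite.equivFinOfCardEq hcard).symm.toEmbedding _
    fun S hS => exists_dotProduct_eq_of_card_le hK hS.le⟩

theorem stmt_15 (q n κ t : ℕ) (hq : IsPrimePow q)
    (ht : 0 < t) (htn : t < n) (hκ : 0 < κ)
    (F : Type) [Field F] [Fintype F] [DecidableEq F] (hF : Fintype.card F = q)
    (hcode : ∃ K : Submodule F (Fin n → F),
      Module.finrank F K = κ ∧ ∀ x ∈ K, x ≠ 0 → t + 1 ≤ hammingNorm x) :
    ∃ C : Fin (q ^ κ) → Set (Fin n → F), IsCoolingCode F n t (q ^ κ) C :=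
  stmt_15_general q n κ t F hF hcode
end

section
/- Let q be a prime power and let n, t be positive integers with t < n and n ≤ q + 1. Then there exists an (n,t)_q-cooling code of size q^{n−t}. -/
open Polynomial

variable {F : Type} [Field F]

/-- Evaluation functional: at a point `some a`, or "at infinity" (top coefficient). -/
noncomputable def Elin (t : ℕ) (ht : 0 < t) (o : Option F) : (Fin t → F) →ₗ[F] F :=
  match o with
  | some a => ∑ i : Fin t, (a ^ (i : ℕ)) • LinearMap.proj i
  | none => LinearMap.proj ⟨t - 1, Nat.sub_lt ht one_pos⟩

lemma Elin_some (t : ℕ) (ht : 0 < t) (a : F) (c : Fin t → F) :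
    Elin t ht (some a) c = ∑ i : Fin t, c i * a ^ (i : ℕ) := by
  simp [Elin, mul_comm]

lemma key_inj (t : ℕ) (ht : 0 < t) (s : Fin t → Option F) (hs : Function.Injective s)
    (c : Fin t → F) (hc : ∀ k, Elin t ht (s k) c = 0) : c = 0 := by
  set p : F[X] := ∑ i : Fin t, C (c i) * X ^ (i : ℕ) with hp
  have hcoeff : ∀ j : Fin t, p.coeff j = c j := by
    intro j
    rw [hp, Polynomial.finset_sum_coeff]
    rw [Finset.sum_eq_single j]
    · simp
    · intro b _ hb
      simp only [coeff_C_mul, coeff_X_pow, Fin.val_eq_val]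
      rw [if_neg (fun h => hb h.symm), mul_zero]
    · simp
  have hcoeff' : ∀ j : ℕ, t ≤ j → p.coeff j = 0 := by
    intro j hj
    rw [hp, Polynomial.finset_sum_coeff]
    apply Finset.sum_eq_zero
    intro b _
    have : (b : ℕ) ≠ j := by omega
    simp only [coeff_C_mul, coeff_X_pow]
    rw [if_neg (fun h => this h.symm), mul_zero]
  have hdeg : p.natDegree < t := by
    by_cases h0 : p = 0
    · simpa [h0] using ht
    · by_contra h
      push_neg at h
      exact h0 (Polynomial.leadingCoeff_eq_zero.mp (hcoeff' _ h))
  have heval : ∀ a : F, (some a ∈ Set.range s) → p.eval a = 0 := by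
    rintro a ⟨k, hk⟩
    have := hc k
    rw [hk, Elin_some] at this
    rw [hp]
    simpa [Polynomial.eval_finset_sum] using this
  have hp0 : p = 0 := by
    by_cases hnone : none ∈ Set.range s
    · -- top coefficient zero, t-1 roots
      obtain ⟨k0, hk0⟩ := hnone
      have htop : c ⟨t - 1, Nat.sub_lt ht one_pos⟩ = 0 := by
        have := hc k0; rw [hk0] at this; simpa [Elin] using this
      have hall : ∀ j : ℕ, t - 1 ≤ j → p.coeff j = 0 := by
        intro j hj
        rcases Nat.lt_or_ge j t with hjt | hjt
        · have hje : j = t - 1 := by omega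
          subst hje
          exact (hcoeff ⟨t - 1, Nat.sub_lt ht one_pos⟩).trans htop
        · exact hcoeff' j hjt
      by_cases h0 : p = 0
      · exact h0
      have hdeg' : p.natDegree < t - 1 := by
        by_contra h
        push_neg at h
        exact h0 (Polynomial.leadingCoeff_eq_zero.mp (hall _ h))
      -- roots: s k for k ≠ k0 are `some a`
      set ι := {k : Fin t // k ≠ k0}
      have f : ι → F := fun k => ((s k.1).getD 0)
      have hfs : ∀ k : ι, s k.1 = some (((s k.1).getD 0)) := by
        rintro ⟨k, hk⟩
        cases hsk : s k with
        | none => exact absurd (hs (hsk.trans hk0.symm)) hk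
        | some a => simp
      apply Polynomial.eq_zero_of_natDegree_lt_card_of_eval_eq_zero p
        (f := fun k : ι => ((s k.1).getD 0))
      · intro a b hab
        apply Subtype.ext
        apply hs
        rw [hfs a, hfs b]
        exact congrArg some hab
      · intro k
        apply heval
        exact ⟨k.1, hfs k⟩
      · have : Fintype.card ι = t - 1 := by
          simp [ι, Fintype.card_subtype_compl]
        omega
    · have hfs : ∀ k : Fin t, s k = some ((s k).getD 0) := by
        intro k
        cases hsk : s k with
        | none => exact absurd ⟨k, hsk⟩ hnone
        | some a => simp
      apply Polynomial.eq_zero_of_natDegree_lt_card_of_eval_eq_zero p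
        (f := fun k : Fin t => ((s k).getD 0))
      · intro a b hab
        apply hs
        rw [hfs a, hfs b]
        exact congrArg some hab
      · intro k
        apply heval
        exact ⟨k, hfs k⟩
      · simpa using hdeg
  funext j
  rw [← hcoeff j, hp0]
  simp

lemma key_surj (t : ℕ) (ht : 0 < t) (s : Fin t → Option F) (hs : Function.Injective s)
    (v : Fin t → F) : ∃ c : Fin t → F, ∀ k, Elin t ht (s k) c = v k := by
  let T : (Fin t → F) →ₗ[F] (Fin t → F) := LinearMap.pi (fun k => Elin t ht (s k))
  have hTinj : Function.Injective T := by
    intro a b hab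
    have h0 : a - b = 0 := by
      apply key_inj t ht s hs
      intro k
      have : T (a - b) = 0 := by rw [map_sub, hab, sub_self]
      calc Elin t ht (s k) (a - b) = T (a - b) k := by simp [T, LinearMap.pi_apply]
        _ = 0 := by rw [this]; rfl
    exact sub_eq_zero.mp h0
  have hTsurj : Function.Surjective T := LinearMap.injective_iff_surjective.mp hTinj
  obtain ⟨c, hc⟩ := hTsurj v
  exact ⟨c, fun k => by rw [← congrFun hc k]; simp [T, LinearMap.pi_apply]⟩

theorem stmt_16 (q n t : ℕ) (hq : IsPrimePow q)
    (ht : 0 < t) (htn : t < n) (hn : n ≤ q + 1)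
    (F : Type) [Field F] [Fintype F] [DecidableEq F] (hF : Fintype.card F = q) :
    ∃ C : Fin (q ^ (n - t)) → Set (Fin n → F), IsCoolingCode F n t (q ^ (n - t)) C := by
  classical
  obtain ⟨β⟩ : Nonempty (Fin n ↪ Option F) := by
    apply Function.Embedding.nonempty_of_card_le
    simp [hF]
    omega
  let Φ : (Fin t → F) →ₗ[F] (Fin n → F) := LinearMap.pi (fun j => Elin t ht (β j))
  have hΦapp : ∀ c j, Φ c j = Elin t ht (β j) c := fun c j => rfl
  have hΦinj : Function.Injective Φ := by
    intro a b hab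
    have h0 : a - b = 0 := by
      apply key_inj t ht (fun k : Fin t => β (Fin.castLE htn.le k))
        (β.injective.comp (Fin.castLE_injective htn.le))
      intro k
      have : Φ (a - b) = 0 := by rw [map_sub, hab, sub_self]
      rw [← hΦapp, this]
      rfl
    exact sub_eq_zero.mp h0
  set V := LinearMap.range Φ with hV
  have hq1 : 0 < q := hq.pos
  have hcardV : Nat.card V = q ^ t := by
    rw [← Nat.card_congr (LinearEquiv.ofInjective Φ hΦinj).toEquiv]
    simp [Nat.card_eq_fintype_card, hF]
  have htot : Nat.card (Fin n → F) = q ^ n := by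
    simp [Nat.card_eq_fintype_card, hF]
  have hcardQ : Nat.card ((Fin n → F) ⧸ V) = q ^ (n - t) := by
    have h1 := Submodule.card_eq_card_quotient_mul_card V
    rw [htot, hcardV] at h1
    have h2 : q ^ n = q ^ t * q ^ (n - t) := by
      rw [← pow_add, Nat.add_sub_cancel' htn.le]
    rw [h2] at h1
    exact (Nat.eq_of_mul_eq_mul_left (pow_pos hq1 t) h1.symm)
  have hQcard : Fintype.card ((Fin n → F) ⧸ V) = q ^ (n - t) := by
    rw [← Nat.card_eq_fintype_card]; exact hcardQ
  let e : Fin (q ^ (n - t)) ≃ ((Fin n → F) ⧸ V) := (Fintype.equivFinOfCardEq hQcard).symm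
  refine ⟨fun i => {z | Submodule.Quotient.mk z = e i}, ?_, ?_⟩
  · intro i j hij
    rw [Set.disjoint_left]
    intro z hz1 hz2
    exact hij (e.injective ((hz1 : _ = e i).symm.trans hz2))
  · intro S hS i
    obtain ⟨x, hx⟩ := Submodule.Quotient.mk_surjective V (e i)
    let σ : Fin t ≃o S := S.orderIsoOfFin hS
    have hσinj : Function.Injective (fun k : Fin t => β (σ k : Fin n)) := by
      intro a b hab
      exact σ.injective (Subtype.ext (β.injective hab))
    obtain ⟨c, hc⟩ := key_surj t ht _ hσinj (fun k => x (σ k : Fin n))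
    refine ⟨x - Φ c, ?_, ?_⟩
    · show Submodule.Quotient.mk (x - Φ c) = e i
      rw [← hx, Submodule.Quotient.eq]
      have : (x - Φ c) - x = -(Φ c) := by ring
      rw [this]
      exact neg_mem (LinearMap.mem_range_self Φ c)
    · intro j hj
      obtain ⟨k, hk⟩ : ∃ k : Fin t, (σ k : Fin n) = j :=
        ⟨σ.symm ⟨j, hj⟩, by simp⟩
      rw [← hk]
      have : (x - Φ c) (σ k : Fin n) = x (σ k : Fin n) - Elin t ht (β (σ k : Fin n)) c := by
        rw [← hΦapp]; rfl
      rw [this, hc k, sub_self]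
end

section
/- Let q be a prime power and let m, s, t, w, M be positive integers with t < m. Suppose q ≤ ∑_{i=0}^{w} C(s, i) and that there exists an (m,t)_q-cooling code of size M. Then there exists an (ms, t, mw)-low-power cooling (LPC) code of size M. -/
/-- An `(n,t,w)`-low-power cooling code of size `M`: `M` pairwise disjoint subsets of
`F_2^n`, every vector in every codeset has Hamming weight at most `w`, and for every
`t`-subset `S` of coordinates and every codeset, some vector in the codeset has
support disjoint from `S`. -/
def IsLPCCode (n t w M : ℕ) (C : Fin M → Set (Fin n → ZMod 2)) : Prop :=
  (∀ i j : Fin M, i ≠ j → Disjoint (C i) (C j)) ∧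
  (∀ i : Fin M, ∀ x ∈ C i, hammingNorm x ≤ w) ∧
  ∀ S : Finset (Fin n), S.card = t → ∀ i : Fin M,
    ∃ x ∈ C i, ∀ j ∈ S, x j = 0

/-!
Encode each field element by a distinct binary word of length `s` and weight at most `w`,
sending `0` to the zero word; there are `∑_{i ≤ w} C(s, i) ≥ q` such words, so this is possible.
Concatenating the encodings of the `m` symbols maps `F^m` injectively into `F_2^{ms}` with
weight at most `mw`, and a zero symbol becomes a zero block. A `t`-set `S` of binary
coordinates meets at most `t` blocks, so a codeword of the cooling code vanishing on those
blocks (padded to `t` of them) is mapped to a word vanishing on `S`.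
-/

open Finset Function

section Weight

variable {ι R : Type*} [Fintype ι] [MulZeroOneClass R] [Nontrivial R] [DecidableEq R]

lemma hammingNorm_indicator_one (A : Finset ι) :
    hammingNorm ((A : Set ι).indicator (1 : ι → R)) = #A := by
  unfold hammingNorm
  congr 1
  ext i
  simp

lemma card_filter_card_le_eq_sum_choose [DecidableEq ι] (w : ℕ) :
    #{A : Finset ι | #A ≤ w} = ∑ i ∈ range (w + 1), (Fintype.card ι).choose i := by
  rw [card_eq_sum_card_fiberwise (f := Finset.card) (t := range (w + 1))]
  · refine sum_congr rfl fun i hi => ?_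
    rw [← card_univ, ← card_powersetCard, powersetCard_eq_filter, powerset_univ, filter_filter]
    congr 1
    ext A
    simp only [mem_range] at hi
    simp only [mem_filter, mem_univ, true_and]
    omega
  · intro A hA
    simp only [coe_filter, mem_univ, true_and, Set.mem_ofPred_eq] at hA
    simp only [coe_range, Set.mem_Iio]
    omega

lemma exists_injective_hammingNorm_le {α : Type*} [Fintype α] [Zero α] (w : ℕ)
    (hα : Fintype.card α ≤ ∑ i ∈ range (w + 1), (Fintype.card ι).choose i) :
    ∃ φ : α → ι → R, Injective φ ∧ φ 0 = 0 ∧ ∀ a, hammingNorm (φ a) ≤ w := by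
  classical
  have hcard : Fintype.card α ≤ Fintype.card {A : Finset ι // #A ≤ w} := by
    rwa [Fintype.card_subtype, card_filter_card_le_eq_sum_choose]
  obtain ⟨ψ⟩ := Embedding.nonempty_of_card_le hcard
  let χ := ψ.setValue 0 ⟨∅, by simp⟩
  refine ⟨fun a => ((χ a : Finset ι) : Set ι).indicator 1, ?_, ?_, fun a => ?_⟩
  · intro a b h
    exact χ.injective (Subtype.ext (coe_injective (Set.indicator_one_inj R h)))
  · simp only [χ, Embedding.setValue_eq, coe_empty, Set.indicator_empty]; rfl
  · rw [hammingNorm_indicator_one]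
    exact (χ a).2

end Weight

section Concat

variable {α β : Type*} {m s : ℕ}

def concatMap (φ : α → Fin s → β) (x : Fin m → α) : Fin (m * s) → β :=
  fun k => φ (x (finProdFinEquiv.symm k).1) (finProdFinEquiv.symm k).2

lemma concatMap_finProdFinEquiv (φ : α → Fin s → β) (x : Fin m → α) (j : Fin m) (b : Fin s) :
    concatMap φ x (finProdFinEquiv (j, b)) = φ (x j) b := by
  simp [concatMap]

lemma concatMap_injective {φ : α → Fin s → β} (hφ : Injective φ) :
    Injective (concatMap (m := m) φ) := by
  intro x y h
  funext j
  exact hφ (funext fun b => by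
    simpa only [concatMap_finProdFinEquiv] using congrFun h (finProdFinEquiv (j, b)))

lemma hammingNorm_concatMap [Zero β] [DecidableEq β] (φ : α → Fin s → β) (x : Fin m → α) :
    hammingNorm (concatMap φ x) = ∑ j, hammingNorm (φ (x j)) := by
  simp only [hammingNorm, card_filter]
  rw [← Fintype.sum_equiv finProdFinEquiv _ _ fun _ => rfl, Fintype.sum_prod_type]
  simp only [concatMap_finProdFinEquiv]

lemma IsCoolingCode.image_concatMap {F : Type*} [Zero F] [Zero β] {t M : ℕ}
    {C : Fin M → Set (Fin m → F)} (hC : IsCoolingCode F m t M C) (htm : t ≤ m)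
    {φ : F → Fin s → β} (hφ : Injective φ) (hφ0 : φ 0 = 0) :
    IsCoolingCode β (m * s) t M fun i => concatMap φ '' C i := by
  classical
  refine ⟨fun i j hij => (Set.disjoint_image_iff (concatMap_injective hφ)).mpr (hC.1 i j hij),
    fun S hS i => ?_⟩
  -- cool every block that meets `S`, padded to `t` blocks
  obtain ⟨T, hST, -, hT⟩ := exists_subsuperset_card_eq (subset_univ _)
    (hS ▸ card_image_le (s := S) (f := fun k => (finProdFinEquiv.symm k).1))
    (by simpa using htm)
  obtain ⟨x, hx, hx0⟩ := hC.2 T hT i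
  refine ⟨concatMap φ x, Set.mem_image_of_mem _ hx, fun k hk => ?_⟩
  rw [concatMap, hx0 _ (hST (mem_image_of_mem _ hk)), hφ0]
  rfl

end Concat

theorem stmt_17_general (q m s t w M : ℕ)
    (htm : t < m)
    (hqs : q ≤ ∑ i ∈ Finset.range (w + 1), s.choose i)
    (F : Type) [Field F] [Fintype F] (hF : Fintype.card F = q)
    (hcool : ∃ C : Fin M → Set (Fin m → F), IsCoolingCode F m t M C) :
    ∃ D : Fin M → Set (Fin (m * s) → ZMod 2), IsLPCCode (m * s) t (m * w) M D := by
  obtain ⟨C, hC⟩ := hcool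
  obtain ⟨φ, hφ, hφ0, hφw⟩ :=
    exists_injective_hammingNorm_le (α := F) (ι := Fin s) (R := ZMod 2) w
      (by rwa [hF, Fintype.card_fin])
  obtain ⟨hdisj, hcool⟩ := hC.image_concatMap htm.le hφ hφ0
  refine ⟨_, hdisj, ?_, hcool⟩
  rintro i _ ⟨x, -, rfl⟩
  calc hammingNorm (concatMap φ x) = ∑ j, hammingNorm (φ (x j)) := hammingNorm_concatMap φ x
    _ ≤ ∑ _j : Fin m, w := sum_le_sum fun j _ => hφw (x j)
    _ = m * w := by simp

theorem stmt_17 (q m s t w M : ℕ) (hq : IsPrimePow q)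
    (ht : 0 < t) (htm : t < m) (hs : 0 < s) (hw : 0 < w) (hM : 0 < M)
    (hqs : q ≤ ∑ i ∈ Finset.range (w + 1), s.choose i)
    (F : Type) [Field F] [Fintype F] [DecidableEq F] (hF : Fintype.card F = q)
    (hcool : ∃ C : Fin M → Set (Fin m → F), IsCoolingCode F m t M C) :
    ∃ D : Fin M → Set (Fin (m * s) → ZMod 2), IsLPCCode (m * s) t (m * w) M D :=
  stmt_17_general q m s t w M htm hqs F hF hcool
end

section
/- Let n, t, w, M be positive integers with t < n and w < n. If M > ∑_{i=w+1}^{n} C(n, i) and there exists an (n,t)-cooling code of size M, then there exists an (n, t, w)-low-power cooling (LPC) code of size at least M − ∑_{i=w+1}^{n} C(n, i). -/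
/-!
Call a vector heavy if its weight exceeds `w`. The codesets being disjoint, distinct codesets
containing a heavy vector contain distinct heavy vectors, so there are at most
`∑_{i > w} C(n, i)` of them (a binary vector is its support). Discarding them leaves a
low-power cooling code: the cooling property holds codeset by codeset.
-/

open Finset Function

section Counting

variable {α : Type*} [Fintype α]

lemma card_filter_lt_card_eq_sum_choose (w : ℕ) :
    #{s : Finset α | w < #s} = ∑ k ∈ Icc (w + 1) (Fintype.card α), (Fintype.card α).choose k := by
  rw [card_eq_sum_card_fiberwise (f := Finset.card) (t := Icc (w + 1) (Fintype.card α))]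
  · refine sum_congr rfl fun k hk => ?_
    rw [← card_univ, ← card_powersetCard, powersetCard_eq_filter, filter_filter]
    congr 1
    ext s
    simp only [mem_filter, mem_powerset, mem_univ, subset_univ, true_and, mem_Icc] at hk ⊢
    exact ⟨And.right, fun h => ⟨by omega, h⟩⟩
  · intro s hs
    simp only [coe_filter, Set.mem_ofPred_eq, mem_univ, true_and] at hs
    simpa [mem_Icc] using ⟨hs, card_le_univ s⟩

variable [DecidableEq α]

def binaryVectorEquivFinset : (α → ZMod 2) ≃ Finset α where
  toFun x := {i | x i ≠ 0}
  invFun s i := if i ∈ s then 1 else 0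
  left_inv x := by
    funext i
    have : ∀ a : ZMod 2, a ≠ 0 → a = 1 := by decide
    by_cases h : x i = 0 <;> simp [h, this]
  right_inv s := by
    ext i
    by_cases h : i ∈ s <;> simp [h]

lemma card_filter_lt_hammingNorm_eq_sum_choose (w : ℕ) :
    #{x : α → ZMod 2 | w < hammingNorm x} =
      ∑ k ∈ Icc (w + 1) (Fintype.card α), (Fintype.card α).choose k := by
  rw [← card_filter_lt_card_eq_sum_choose]
  exact card_equiv binaryVectorEquivFinset fun x => by simp [binaryVectorEquivFinset, hammingNorm]

end Counting

lemma card_le_card_of_forall_exists_mem {α ι : Type*} {C : ι → Set α}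
    (hC : Pairwise (Disjoint on C)) {I : Finset ι} {H : Finset α}
    (hI : ∀ i ∈ I, ∃ x ∈ C i, x ∈ H) : #I ≤ #H := by
  choose f hfC hfH using hI
  rw [← card_attach]
  refine card_le_card_of_injOn (fun i => f i i.2) (fun i _ => hfH i i.2) fun i _ j _ hij => ?_
  by_contra hne
  exact Set.disjoint_left.mp (hC (Subtype.coe_ne_coe.mpr hne)) (hfC i i.2)
    (by simpa only [hij] using hfC j j.2)

lemma IsCoolingCode.isLPCCode_comp {n t w M M' : ℕ} {C : Fin M → Set (Fin n → ZMod 2)}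
    (hC : IsCoolingCode (ZMod 2) n t M C) {f : Fin M' → Fin M} (hf : Injective f)
    (hw : ∀ k, ∀ x ∈ C (f k), hammingNorm x ≤ w) : IsLPCCode n t w M' (C ∘ f) :=
  ⟨fun _ _ hkl => hC.1 _ _ (hf.ne hkl), hw, fun S hS k => hC.2 S hS (f k)⟩

theorem stmt_19_general (n t w M : ℕ)
    (hcool : ∃ C : Fin M → Set (Fin n → ZMod 2), IsCoolingCode (ZMod 2) n t M C) :
    ∃ M' : ℕ, M - ∑ i ∈ Finset.Icc (w + 1) n, n.choose i ≤ M' ∧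
      ∃ D : Fin M' → Set (Fin n → ZMod 2), IsLPCCode n t w M' D := by
  classical
  obtain ⟨C, hC⟩ := hcool
  set light : Finset (Fin M) := {i | ∀ x ∈ C i, hammingNorm x ≤ w}
  have heavy_le : #lightᶜ ≤ ∑ i ∈ Icc (w + 1) n, n.choose i :=
    calc #lightᶜ ≤ #{x : Fin n → ZMod 2 | w < hammingNorm x} :=
          card_le_card_of_forall_exists_mem hC.1 fun i hi => by simpa [light] using hi
      _ = ∑ i ∈ Icc (w + 1) n, n.choose i := by
          simpa using card_filter_lt_hammingNorm_eq_sum_choose (α := Fin n) w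
  refine ⟨#light, ?_, _, hC.isLPCCode_comp (light.orderEmbOfFin rfl).injective fun k => ?_⟩
  · have := card_add_card_compl light
    rw [Fintype.card_fin] at this
    omega
  · exact (mem_filter.mp (light.orderEmbOfFin_mem rfl k)).2

theorem stmt_19 (n t w M : ℕ) (ht : 0 < t) (htn : t < n) (hw : 0 < w) (hwn : w < n)
    (hM : ∑ i ∈ Finset.Icc (w + 1) n, n.choose i < M)
    (hcool : ∃ C : Fin M → Set (Fin n → ZMod 2), IsCoolingCode (ZMod 2) n t M C) :
    ∃ M' : ℕ, M - ∑ i ∈ Finset.Icc (w + 1) n, n.choose i ≤ M' ∧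
      ∃ D : Fin M' → Set (Fin n → ZMod 2), IsLPCCode n t w M' D :=
  stmt_19_general n t w M hcool
end
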